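/- arXiv:1610.01808 — 7 statements merged into one kernel-verified Lean document; each statement's English description precedes it below -/
import Mathlib

section
/- Let n ≥ 1 and p ∈ [0,1], and let A be the amplitude of the random sparse IQP circuit on n qubits with edge probability p. Then the expectation of |A|² over the random choice of circuit equals 2^(−n). -/
/-! Write `ζ = exp(iπ/4)`, a primitive 8th root of unity, so that
`A = 2^(-n) Σ_x c_x ζ^(v·x)` with `|c_x| = 1`. Summing `|A|²` over the vertex phases `v` is
Parseval's identity for the characters `v ↦ ζ^(v·x)`, which separate the points
`x ∈ {0,1}^n` because the coordinates of `x` are distinct residues mod 8. Hence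
`Σ_v |A|² = 2^(-2n) · 8^n · 2^n = 4^n` whatever `w` and `a` are, and since the weights of
the edge indicators sum to one for every `p`, the expectation is `4^n / 8^n = 2^(-n)`. -/

open Finset

noncomputable section

/-- The set of ordered pairs `(i, j)` with `i < j` in `Fin n`. -/
abbrev Pairs (n : ℕ) := {q : Fin n × Fin n // q.1 < q.2}

/-- The amplitude of the sparse IQP circuit determined by edge indicators `w`,
edge phases `a` and vertex phases `v`:
`A = 2^(−n) · Σ_x exp((iπ/4)·(Σ_{i<j} 2·w_{ij}·a_{ij}·x_i·x_j + Σ_k v_k·x_k))`. -/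
def amp (n : ℕ) (w : Pairs n → Fin 2) (a : Pairs n → Fin 4) (v : Fin n → Fin 8) : ℂ :=
  (2 : ℂ) ^ (-(n : ℤ)) * ∑ x : Fin n → ZMod 2,
    Complex.exp (Complex.I * (Real.pi : ℂ) / 4 *
      ((∑ e : Pairs n, 2 * (w e : ℕ) * (a e : ℕ) * (x e.1.1).val * (x e.1.2).val)
        + ∑ k : Fin n, (v k : ℕ) * (x k).val : ℕ))

/-- The probability of the configuration `(w, a, v)`: each `w e` is `1` with probability `p`
and `0` with probability `1 − p`, each `a e` is uniform on `{0,1,2,3}`, and each `v k` is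
uniform on `{0,…,7}`, all mutually independently. -/
def configWeight (n : ℕ) (p : ℝ) (w : Pairs n → Fin 2) : ℝ :=
  (∏ e : Pairs n, if w e = 1 then p else 1 - p)
    * (1 / 4) ^ (Fintype.card (Pairs n)) * (1 / 8) ^ n

open ComplexConjugate

namespace IsPrimitiveRoot

variable {m : ℕ} {ζ : ℂ}

theorem sum_pow_mul_conj_pow (hζ : IsPrimitiveRoot ζ m) {a b : ℕ} (ha : a < m) (hb : b < m) :
    ∑ t : Fin m, ζ ^ (t * a : ℕ) * conj (ζ ^ (t * b : ℕ)) = if a = b then (m : ℂ) else 0 := by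
  have hζ0 : ζ ≠ 0 := hζ.ne_zero (by omega)
  have hconj : ∀ k : ℕ, conj (ζ ^ k) = (ζ ^ k)⁻¹ := fun k =>
    (Complex.inv_eq_conj (by rw [norm_pow, hζ.norm'_eq_one (by omega), one_pow])).symm
  set z := ζ ^ a * (ζ ^ b)⁻¹
  have hterm : ∀ t : ℕ, ζ ^ (t * a) * conj (ζ ^ (t * b)) = z ^ t := fun t => by
    rw [hconj, mul_pow, inv_pow, ← pow_mul, ← pow_mul, mul_comm a, mul_comm b]
  rw [Fin.sum_univ_eq_sum_range (fun t => ζ ^ (t * a) * conj (ζ ^ (t * b))) m]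
  simp_rw [hterm]
  split_ifs with hab
  · subst hab
    simp [z, hζ0]
  · have hz1 : z ≠ 1 := fun h =>
      hab (hζ.pow_inj ha hb ((mul_inv_eq_one₀ (pow_ne_zero _ hζ0)).mp h))
    have hzm : z ^ m = 1 := by
      rw [mul_pow, inv_pow, ← pow_mul, ← pow_mul, pow_mul', pow_mul', hζ.pow_eq_one,
        one_pow, one_pow, inv_one, one_mul]
    rw [geom_sum_eq hz1, hzm, sub_self, zero_div]

theorem sum_prod_pow_mul_conj_prod_pow {ι : Type*} [Fintype ι] [DecidableEq ι]
    (hζ : IsPrimitiveRoot ζ m) {x y : ι → ℕ} (hx : ∀ k, x k < m) (hy : ∀ k, y k < m) :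
    ∑ v : ι → Fin m, (∏ k, ζ ^ (v k * x k : ℕ)) * conj (∏ k, ζ ^ (v k * y k : ℕ)) =
      if x = y then (m : ℂ) ^ Fintype.card ι else 0 := by
  simp_rw [map_prod, ← prod_mul_distrib]
  rw [← Fintype.prod_sum (fun k (t : Fin m) => ζ ^ (t * x k : ℕ) * conj (ζ ^ (t * y k : ℕ)))]
  simp_rw [hζ.sum_pow_mul_conj_pow (hx _) (hy _)]
  split_ifs with hxy
  · simp [hxy]
  · obtain ⟨k, hk⟩ := Function.ne_iff.mp hxy
    exact prod_eq_zero (mem_univ k) (if_neg hk)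

theorem sum_norm_sq_sum_mul_prod_pow {X ι : Type*} [Fintype X] [Fintype ι] [DecidableEq ι]
    (hζ : IsPrimitiveRoot ζ m) (e : X → ι → ℕ) (he : Function.Injective e)
    (hlt : ∀ x k, e x k < m) (c : X → ℂ) :
    ∑ v : ι → Fin m, ‖∑ x, c x * ∏ k, ζ ^ (v k * e x k : ℕ)‖ ^ 2 =
      m ^ Fintype.card ι * ∑ x, ‖c x‖ ^ 2 := by
  classical
  apply Complex.ofReal_injective
  push_cast
  simp_rw [← Complex.mul_conj', map_sum, map_mul, sum_mul_sum]
  rw [sum_comm]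
  simp_rw [sum_comm (γ := ι → Fin m)]
  have hinner : ∀ x y, ∑ v : ι → Fin m, (c x * ∏ k, ζ ^ (v k * e x k : ℕ)) *
      (conj (c y) * conj (∏ k, ζ ^ (v k * e y k : ℕ))) =
        if x = y then (m : ℂ) ^ Fintype.card ι * (c x * conj (c x)) else 0 := fun x y => by
    rw [sum_congr rfl fun v _ => mul_mul_mul_comm (c x) _ (conj (c y)) _, ← mul_sum,
      hζ.sum_prod_pow_mul_conj_prod_pow (hlt x) (hlt y)]
    simp_rw [he.eq_iff]
    split_ifs with hxy
    · rw [hxy, mul_comm]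
    · rw [mul_zero]
  simp_rw [hinner]
  simp [mul_sum]

end IsPrimitiveRoot

def zeta8 : ℂ := Complex.exp (Complex.I * Real.pi / 4)

theorem isPrimitiveRoot_zeta8 : IsPrimitiveRoot zeta8 8 := by
  rw [zeta8]
  convert Complex.isPrimitiveRoot_exp 8 (by norm_num) using 2
  push_cast
  ring

theorem amp_eq_sum_zeta8_pow (n : ℕ) (w : Pairs n → Fin 2) (a : Pairs n → Fin 4)
    (v : Fin n → Fin 8) :
    amp n w a v = (2 : ℂ) ^ (-(n : ℤ)) * ∑ x : Fin n → ZMod 2,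
      zeta8 ^ (∑ e : Pairs n, 2 * (w e : ℕ) * (a e : ℕ) * (x e.1.1).val * (x e.1.2).val) *
        ∏ k, zeta8 ^ ((v k : ℕ) * (x k).val) := by
  refine congrArg _ (sum_congr rfl fun x _ => ?_)
  rw [prod_pow_eq_pow_sum, ← pow_add, zeta8, ← Complex.exp_nat_mul, mul_comm]

theorem sum_norm_sq_amp (n : ℕ) (w : Pairs n → Fin 2) (a : Pairs n → Fin 4) :
    ∑ v : Fin n → Fin 8, ‖amp n w a v‖ ^ 2 = 4 ^ n := by
  have hval : Function.Injective fun (x : Fin n → ZMod 2) k => (x k).val :=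
    fun x y h => funext fun k => ZMod.val_injective 2 (congr_fun h k)
  simp_rw [amp_eq_sum_zeta8_pow, norm_mul, mul_pow, ← mul_sum]
  rw [isPrimitiveRoot_zeta8.sum_norm_sq_sum_mul_prod_pow _ hval
    fun x k => (x k).val_lt.trans (by norm_num)]
  simp only [norm_pow, isPrimitiveRoot_zeta8.norm'_eq_one (by norm_num), one_pow, sum_const,
    card_univ, Fintype.card_fun, ZMod.card, Fintype.card_fin, nsmul_eq_mul, mul_one]
  rw [norm_zpow, Complex.norm_ofNat]
  push_cast
  rw [zpow_neg, zpow_natCast, inv_pow, ← pow_mul, pow_mul', ← mul_pow, inv_mul_eq_div, ← div_pow]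
  norm_num

theorem sum_configWeight (n : ℕ) (p : ℝ) :
    ∑ w : Pairs n → Fin 2, configWeight n p w = (1 / 4) ^ Fintype.card (Pairs n) * (1 / 8) ^ n := by
  simp only [configWeight, ← sum_mul]
  rw [← Fintype.prod_sum (fun (_ : Pairs n) (b : Fin 2) => if b = 1 then p else 1 - p)]
  simp [Fin.sum_univ_two]

theorem expectation_abs_sq_amp_general (n : ℕ) (p : ℝ) :
    ∑ w : Pairs n → Fin 2, ∑ a : Pairs n → Fin 4, ∑ v : Fin n → Fin 8,
      configWeight n p w * ‖amp n w a v‖ ^ 2 = (2 : ℝ) ^ (-(n : ℤ)) := by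
  simp_rw [← mul_sum, sum_norm_sq_amp, sum_const, card_univ, Fintype.card_fun, Fintype.card_fin,
    nsmul_eq_mul, ← sum_mul, sum_configWeight]
  push_cast
  rw [mul_mul_mul_comm, ← mul_pow, ← mul_pow, zpow_neg, zpow_natCast, ← inv_pow]
  norm_num

/-- for `n ≥ 1` and `p ∈ [0,1]`, the expectation of `|A|²` over the random
choice of sparse IQP circuit equals `2^(−n)`. -/
theorem expectation_abs_sq_amp (n : ℕ) (hn : 1 ≤ n) (p : ℝ) (hp0 : 0 ≤ p) (hp1 : p ≤ 1) :
    ∑ w : Pairs n → Fin 2, ∑ a : Pairs n → Fin 4, ∑ v : Fin n → Fin 8,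
      configWeight n p w * ‖amp n w a v‖ ^ 2 = (2 : ℝ) ^ (-(n : ℤ)) :=
  expectation_abs_sq_amp_general n p

end
end

section
/- There exist a constant γ₀ > 0 and n₀ ∈ ℕ such that for all γ ≥ γ₀ and all n ≥ n₀ with p := γ·(ln n)/n ≤ 1, one has Σ_{b,c,d ≥ 0, b+c+d ≤ n} C(n,b)·C(n−b,c)·C(n−b−c,d)·(1−p)^(bc+bd+cd) ≤ 5·2^n, where C(·,·) denotes the binomial coefficient. -/
open Finset

lemma choose_le_pow_div {m n : ℕ} (h : m ≤ n) (b : ℕ) :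
    (m.choose b : ℝ) ≤ (n:ℝ)^b / (b.factorial : ℝ) := by
  rw [le_div_iff₀ (by positivity)]
  have h1 : m.choose b * b.factorial ≤ n ^ b :=
    calc m.choose b * b.factorial = m.descFactorial b := by
          rw [Nat.descFactorial_eq_factorial_mul_choose]; ring
      _ ≤ m ^ b := Nat.descFactorial_le_pow _ _
      _ ≤ n ^ b := Nat.pow_le_pow_left h b
  exact_mod_cast h1

lemma pow_div_factorial_mono (n : ℕ) : ∀ K, K ≤ n → ∀ b, b ≤ K →
    (n:ℝ)^b / (b.factorial : ℝ) ≤ (n:ℝ)^K / (K.factorial : ℝ) := by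
  intro K
  induction K with
  | zero => intro _ b hb; interval_cases b; exact le_refl _
  | succ K ih =>
    intro hK b hb
    rcases Nat.lt_or_ge b (K+1) with h | h
    · have hbK : b ≤ K := Nat.lt_succ_iff.mp h
      refine le_trans (ih (by omega) b hbK) ?_
      rw [div_le_div_iff₀ (by positivity) (by positivity)]
      have hfs : (((K+1).factorial : ℕ) : ℝ) = ((K:ℝ)+1) * (K.factorial : ℝ) := by
        push_cast [Nat.factorial_succ]; ring
      rw [hfs, pow_succ]
      have hn : ((K:ℝ)+1) ≤ (n:ℝ) := by exact_mod_cast hK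
      have h2 : (0:ℝ) ≤ (n:ℝ)^K := by positivity
      have h3 : (0:ℝ) < (K.factorial : ℝ) := by exact_mod_cast Nat.factorial_pos K
      nlinarith [mul_le_mul_of_nonneg_left hn (mul_nonneg h2 h3.le)]
    · have : b = K+1 := le_antisymm hb h
      subst this; exact le_refl _

lemma pow_self_le_factorial_mul_exp : ∀ K : ℕ, (K:ℝ)^K ≤ (K.factorial : ℝ) * Real.exp 1 ^ K := by
  intro K
  induction K with
  | zero => simp
  | succ K ih =>
    have he : (1:ℝ) ≤ Real.exp 1 := by linarith [Real.add_one_le_exp (1:ℝ)]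
    rcases Nat.eq_zero_or_pos K with h0 | h0
    · subst h0; simpa using he
    have hKpos : (0:ℝ) < K := by exact_mod_cast h0
    have key : ((K:ℝ)+1)^K ≤ (K:ℝ)^K * Real.exp 1 := by
      have h1 : (K:ℝ)+1 ≤ K * Real.exp (1/K) := by
        have h2 := Real.add_one_le_exp (1/(K:ℝ))
        have hKK : (K:ℝ) * (1/K) = 1 := by field_simp
        nlinarith [mul_le_mul_of_nonneg_left h2 hKpos.le]
      calc ((K:ℝ)+1)^K ≤ ((K:ℝ) * Real.exp (1/K))^K := by
            apply pow_le_pow_left₀ (by positivity) h1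
        _ = (K:ℝ)^K * Real.exp (1/K) ^ K := mul_pow _ _ _
        _ = (K:ℝ)^K * Real.exp 1 := by
            rw [← Real.exp_nat_mul]
            congr 1
            field_simp
    have hfc : (((K+1).factorial : ℕ) : ℝ) = ((K:ℝ)+1) * (K.factorial : ℝ) := by
      push_cast [Nat.factorial_succ]; ring
    have hfpos : (0:ℝ) < (K.factorial : ℝ) := by exact_mod_cast Nat.factorial_pos K
    have hepow : (0:ℝ) < Real.exp 1 ^ K := by positivity
    push_cast
    calc ((K:ℝ)+1)^(K+1) = ((K:ℝ)+1)^K * ((K:ℝ)+1) := by ring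
      _ ≤ ((K:ℝ)^K * Real.exp 1) * ((K:ℝ)+1) :=
            mul_le_mul_of_nonneg_right key (by positivity)
      _ ≤ ((K.factorial : ℝ) * Real.exp 1 ^ K * Real.exp 1) * ((K:ℝ)+1) :=
            mul_le_mul_of_nonneg_right (mul_le_mul_of_nonneg_right ih (by positivity)) (by positivity)
      _ = (((K:ℝ)+1) * (K.factorial:ℝ)) * Real.exp 1 ^ (K+1) := by ring
      _ = (((K+1).factorial : ℕ) : ℝ) * Real.exp 1 ^ (K+1) := by rw [hfc]


lemma kappa_le {n : ℕ} (hn : 100 ≤ n) :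
    (n:ℝ)^(n/100) / ((n/100).factorial : ℝ) ≤ 545 ^ (n/100) := by
  set K := n/100 with hKdef
  have hK1 : 1 ≤ K := (Nat.one_le_div_iff (by norm_num)).mpr hn
  have hn199 : (n:ℝ) ≤ 199 * K := by
    have h1 : n % 100 < 100 := Nat.mod_lt _ (by norm_num)
    have h2 : 100 * K + n % 100 = n := Nat.div_add_mod n 100
    have : n ≤ 199 * K := by omega
    exact_mod_cast this
  have hfpos : (0:ℝ) < (K.factorial : ℝ) := by exact_mod_cast Nat.factorial_pos K
  have hKpos : (0:ℝ) ≤ (K:ℝ) := Nat.cast_nonneg _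
  have he : Real.exp 1 < 2.7182818286 := Real.exp_one_lt_d9
  have he0 : (0:ℝ) < Real.exp 1 := Real.exp_pos 1
  calc (n:ℝ)^K / (K.factorial : ℝ) ≤ ((199:ℝ)*K)^K / (K.factorial : ℝ) := by
        gcongr
    _ = 199^K * ((K:ℝ)^K / (K.factorial : ℝ)) := by rw [mul_pow]; ring
    _ ≤ 199^K * Real.exp 1 ^ K := by
        have h3 := pow_self_le_factorial_mul_exp K
        have : (K:ℝ)^K / (K.factorial : ℝ) ≤ Real.exp 1 ^ K := by
          rw [div_le_iff₀ hfpos]; linarith [h3]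
        have h199 : (0:ℝ) ≤ (199:ℝ)^K := by positivity
        nlinarith
    _ = (199 * Real.exp 1)^K := by rw [mul_pow]
    _ ≤ 545^K := by
        apply pow_le_pow_left₀ (by positivity) (by nlinarith) K

lemma aux_eventually : ∀ᶠ (n:ℕ) in Filter.atTop,
    3*((n:ℝ)+1)^3 * 545^(3*(n/100)) ≤ 2^n := by
  set c : ℝ := (545:ℝ) ^ ((3:ℝ)/100) with hc
  have hc0 : (0:ℝ) < c := Real.rpow_pos_of_pos (by norm_num) _
  have hc1 : (1:ℝ) ≤ c := Real.one_le_rpow (by norm_num) (by norm_num)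
  have hc2 : c < 2 := by
    by_contra h
    push_neg at h
    have h100 : c ^ (100:ℕ) = (545:ℝ)^(3:ℕ) := by
      rw [hc, ← Real.rpow_natCast ((545:ℝ) ^ ((3:ℝ)/100)) 100, ← Real.rpow_mul (by norm_num)]
      norm_num
    have h2 : (2:ℝ)^(100:ℕ) ≤ c^(100:ℕ) := pow_le_pow_left₀ (by norm_num) h 100
    rw [h100] at h2
    norm_num at h2
  have hr : c/2 < 1 := by linarith
  have hr0 : (0:ℝ) ≤ c/2 := by linarith
  have htend := tendsto_pow_const_mul_const_pow_of_lt_one 3 hr0 hr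
  have hev : ∀ᶠ (n:ℕ) in Filter.atTop, (n:ℝ)^3 * (c/2)^n < 1/24 :=
    htend.eventually (gt_mem_nhds (by norm_num))
  filter_upwards [hev, Filter.eventually_ge_atTop 1] with n h1 h2
  have hK : (545:ℝ)^(3*(n/100)) ≤ c^n := by
    have h3 : ((3*(n/100) : ℕ):ℝ) ≤ (3/100) * (n:ℝ) := by
      have h4 : ((n/100 : ℕ):ℝ) ≤ (n:ℝ)/100 := by
        apply (Nat.cast_div_le).trans
        norm_num
      push_cast
      linarith
    calc (545:ℝ)^(3*(n/100)) = (545:ℝ) ^ (((3*(n/100):ℕ)):ℝ) := (Real.rpow_natCast _ _).symm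
      _ ≤ (545:ℝ) ^ ((3/100) * (n:ℝ)) := Real.rpow_le_rpow_of_exponent_le (by norm_num) h3
      _ = c ^ (n:ℝ) := by
          rw [hc, Real.rpow_mul (by norm_num : (0:ℝ) ≤ 545)]
      _ = c ^ n := Real.rpow_natCast _ _
  have hn1 : (1:ℝ) ≤ (n:ℝ) := by exact_mod_cast h2
  have h8 : ((n:ℝ)+1)^3 ≤ 8 * (n:ℝ)^3 := by
    calc ((n:ℝ)+1)^3 ≤ (2*(n:ℝ))^3 := by
          apply pow_le_pow_left₀ (by positivity) (by linarith)
      _ = 8 * (n:ℝ)^3 := by ring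
  have hcn : c^n = (c/2)^n * 2^n := by
    rw [div_pow, div_mul_eq_mul_div]
    field_simp
  calc 3*((n:ℝ)+1)^3 * 545^(3*(n/100)) ≤ 3*(8*(n:ℝ)^3) * c^n := by
        apply mul_le_mul ?_ hK (by positivity) (by positivity)
        nlinarith
    _ = 24 * ((n:ℝ)^3 * (c/2)^n) * 2^n := by rw [hcn]; ring
    _ ≤ 24 * (1/24) * 2^n := by
        have hp : (0:ℝ) ≤ (2:ℝ)^n := by positivity
        nlinarith [h1, hp]
    _ ≤ 2^n := by norm_num


set_option maxHeartbeats 2000000 in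
/-- there exist `γ₀ > 0` and `n₀` such that for all `γ ≥ γ₀` and `n ≥ n₀`
with `p = γ·(ln n)/n ≤ 1`:
`Σ_{b+c+d ≤ n} C(n,b)·C(n−b,c)·C(n−b−c,d)·(1−p)^(bc+bd+cd) ≤ 5·2^n`. -/
theorem sum_binom_bound :
    ∃ γ₀ : ℝ, 0 < γ₀ ∧ ∃ n₀ : ℕ, ∀ γ : ℝ, γ₀ ≤ γ → ∀ n : ℕ, n₀ ≤ n →
      γ * Real.log n / n ≤ 1 →
      ∑ t ∈ ((Finset.range (n + 1)) ×ˢ (Finset.range (n + 1)) ×ˢ (Finset.range (n + 1))).filter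
          (fun t => t.1 + t.2.1 + t.2.2 ≤ n),
        (n.choose t.1 : ℝ) * ((n - t.1).choose t.2.1) * ((n - t.1 - t.2.1).choose t.2.2) *
          (1 - γ * Real.log n / n) ^ (t.1 * t.2.1 + t.1 * t.2.2 + t.2.1 * t.2.2)
        ≤ 5 * 2 ^ n := by
  obtain ⟨N, hN⟩ := Filter.eventually_atTop.mp aux_eventually
  refine ⟨800, by norm_num, max N 100, ?_⟩
  intro γ hγ n hn hp1
  have hn100 : 100 ≤ n := le_trans (le_max_right _ _) hn
  have hNn : N ≤ n := le_trans (le_max_left _ _) hn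
  have hn0 : (0:ℝ) < n := by exact_mod_cast (by omega : 0 < n)
  have hn0' : (n:ℝ) ≠ 0 := ne_of_gt hn0
  have hn1R : (1:ℝ) ≤ n := by exact_mod_cast (by omega : 1 ≤ n)
  have hn100R : (100:ℝ) ≤ n := by exact_mod_cast hn100
  have hlog0 : 0 ≤ Real.log n := Real.log_nonneg hn1R
  have hp0 : 0 ≤ γ * Real.log n / n :=
    div_nonneg (mul_nonneg (by linarith) hlog0) hn0.le
  set x : ℝ := 1 - γ * Real.log n / n with hxdef
  have hx0 : 0 ≤ x := by rw [hxdef]; linarith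
  have hx1 : x ≤ 1 := by rw [hxdef]; linarith
  set A := Finset.range (n+1) with hA
  set S := (A ×ˢ A ×ˢ A).filter (fun t => t.1 + t.2.1 + t.2.2 ≤ n) with hS
  set f : ℕ×ℕ×ℕ → ℝ := fun t =>
    (n.choose t.1 : ℝ) * ((n - t.1).choose t.2.1) * ((n - t.1 - t.2.1).choose t.2.2) *
      x ^ (t.1 * t.2.1 + t.1 * t.2.2 + t.2.1 * t.2.2) with hfdef
  show ∑ t ∈ S, f t ≤ 5 * 2 ^ n
  have hfnonneg : ∀ t : ℕ×ℕ×ℕ, 0 ≤ f t := by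
    intro t
    simp only [hfdef]
    have hxp := pow_nonneg hx0 (t.1 * t.2.1 + t.1 * t.2.2 + t.2.1 * t.2.2)
    positivity
  -- x^b is tiny when b is large
  have key_xb : ∀ b : ℕ, n ≤ 100*b → x^b ≤ ((n:ℝ)^8)⁻¹ := by
    intro b hb
    have hbn : (n:ℝ) ≤ 100*b := by exact_mod_cast hb
    have hb0 : (0:ℝ) ≤ b := Nat.cast_nonneg b
    have h8n : 8*(n:ℝ) ≤ γ*b := by nlinarith
    have h1 : (8:ℝ) ≤ γ*b/n := by rw [le_div_iff₀ hn0]; linarith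
    have h2 : 8*Real.log n ≤ (γ*b/n)*Real.log n := mul_le_mul_of_nonneg_right h1 hlog0
    calc x^b ≤ Real.exp (-(γ * Real.log n / n))^b := by
          apply pow_le_pow_left₀ hx0 ?_
          rw [hxdef]
          linarith [Real.add_one_le_exp (-(γ * Real.log n / n))]
      _ = Real.exp ((b:ℕ) * -(γ * Real.log n / n)) := by rw [Real.exp_nat_mul]
      _ ≤ Real.exp (-(8 * Real.log n)) := by
          apply Real.exp_le_exp.mpr
          have h3 : (b:ℝ) * -(γ * Real.log n / n) = -((γ*b/n)*Real.log n) := by ring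
          rw [h3]
          linarith
      _ = ((n:ℝ)^8)⁻¹ := by
          rw [Real.exp_neg]
          congr 1
          rw [show (8:ℝ)*Real.log n = ((8:ℕ):ℝ)*Real.log n by norm_num,
            Real.exp_nat_mul, Real.exp_log hn0]
  have hchoose2 : ∀ m k : ℕ, m ≤ n → ((m.choose k : ℕ):ℝ) ≤ (2:ℝ)^n := by
    intro m k hm
    have h1 : m.choose k ≤ 2^m := by
      rcases le_or_gt k m with h | h
      · calc m.choose k ≤ ∑ i ∈ Finset.range (m+1), m.choose i :=
            Finset.single_le_sum (fun i _ => Nat.zero_le _) (Finset.mem_range.mpr (by omega))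
          _ = 2^m := Nat.sum_range_choose m
      · rw [Nat.choose_eq_zero_of_lt h]; exact Nat.zero_le _
    have h2 : (2:ℕ)^m ≤ 2^n := Nat.pow_le_pow_right (by norm_num) hm
    exact_mod_cast le_trans h1 h2
  have hchoose_pow : ∀ m k : ℕ, m ≤ n → ((m.choose k : ℕ) : ℝ) ≤ (n:ℝ)^k := by
    intro m k hm
    calc ((m.choose k:ℕ):ℝ) ≤ (n:ℝ)^k / (k.factorial:ℝ) := choose_le_pow_div hm k
      _ ≤ (n:ℝ)^k / 1 := by
          apply div_le_div_of_nonneg_left (by positivity) (by norm_num) ?_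
          exact_mod_cast Nat.one_le_iff_ne_zero.mpr k.factorial_ne_zero
      _ = (n:ℝ)^k := div_one _
  have hmul7 : ∀ u v : ℕ, (n:ℝ)^u * (n:ℝ)^v * (((n:ℝ)^8)⁻¹)^(u+v) = (((n:ℝ)^7)⁻¹)^(u+v) := by
    intro u v
    rw [show (n:ℝ)^u * (n:ℝ)^v = (n:ℝ)^(u+v) by rw [pow_add], ← mul_pow,
      show (n:ℝ) * ((n:ℝ)^8)⁻¹ = ((n:ℝ)^7)⁻¹ from by field_simp]
  have hpow7le : ∀ w : ℕ, 1 ≤ w → (((n:ℝ)^7)⁻¹)^w ≤ ((n:ℝ)^7)⁻¹ := by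
    intro w hw
    calc (((n:ℝ)^7)⁻¹)^w ≤ (((n:ℝ)^7)⁻¹)^1 := by
          apply pow_le_pow_of_le_one (by positivity) ?_ hw
          apply inv_le_one_of_one_le₀
          calc (1:ℝ) = 1^7 := by norm_num
            _ ≤ (n:ℝ)^7 := pow_le_pow_left₀ (by norm_num) hn1R 7
      _ = ((n:ℝ)^7)⁻¹ := pow_one _
  have hsplit : ∑ t ∈ S, f t ≤ (∑ t ∈ S.filter (fun t => t.2.1 = 0 ∧ t.2.2 = 0), f t) + (∑ t ∈ S.filter (fun t => t.1 = 0 ∧ t.2.2 = 0), f t) + (∑ t ∈ S.filter (fun t => t.1 = 0 ∧ t.2.1 = 0), f t) + (∑ t ∈ S.filter (fun t => t.2.1 ≤ t.1 ∧ t.2.2 ≤ t.1 ∧ 1 ≤ t.2.1 + t.2.2 ∧ 100*t.1 < n), f t) + (∑ t ∈ S.filter (fun t => t.1 ≤ t.2.1 ∧ t.2.2 ≤ t.2.1 ∧ 1 ≤ t.1 + t.2.2 ∧ 100*t.2.1 < n), f t) + (∑ t ∈ S.filter (fun t => t.1 ≤ t.2.2 ∧ t.2.1 ≤ t.2.2 ∧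 1 ≤ t.1 + t.2.1 ∧ 100*t.2.2 < n), f t) + (∑ t ∈ S.filter (fun t => 1 ≤ t.2.1 + t.2.2 ∧ n ≤ 100*t.1), f t) + (∑ t ∈ S.filter (fun t => 1 ≤ t.1 + t.2.2 ∧ n ≤ 100*t.2.1), f t) + (∑ t ∈ S.filter (fun t => 1 ≤ t.1 + t.2.1 ∧ n ≤ 100*t.2.2), f t) := by
    calc ∑ t ∈ S, f t
        ≤ ∑ t ∈ S, ((if t.2.1 = 0 ∧ t.2.2 = 0 then f t else 0) + (if t.1 = 0 ∧ t.2.2 = 0 then f t else 0) + (if t.1 = 0 ∧ t.2.1 = 0 then f t else 0) + (if t.2.1 ≤ t.1 ∧ t.2.2 ≤ t.1 ∧ 1 ≤ t.2.1 + t.2.2 ∧ 100*t.1 < n then f t else 0) + (if t.1 ≤ t.2.1 ∧ t.2.2 ≤ t.2.1 ∧ 1 ≤ t.1 + t.2.2 ∧ 100*t.2.1 < n then f t else 0) + (if t.1 ≤ t.2.2 ∧ t.2.1 ≤ t.2.2 ∧ 1 ≤ t.1 + t.2.1 ∧ 100*t.2.2 < n then f t else 0) + (if 1 ≤ t.2.1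 + t.2.2 ∧ n ≤ 100*t.1 then f t else 0) + (if 1 ≤ t.1 + t.2.2 ∧ n ≤ 100*t.2.1 then f t else 0) + (if 1 ≤ t.1 + t.2.1 ∧ n ≤ 100*t.2.2 then f t else 0)) := by
          apply Finset.sum_le_sum
          intro t ht
          have g1 : (0:ℝ) ≤ (if t.2.1 = 0 ∧ t.2.2 = 0 then f t else 0) := by
            split_ifs
            · exact hfnonneg t
            · exact le_refl 0
          have g2 : (0:ℝ) ≤ (if t.1 = 0 ∧ t.2.2 = 0 then f t else 0) := by
            split_ifs
            · exact hfnonneg t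
            · exact le_refl 0
          have g3 : (0:ℝ) ≤ (if t.1 = 0 ∧ t.2.1 = 0 then f t else 0) := by
            split_ifs
            · exact hfnonneg t
            · exact le_refl 0
          have g4 : (0:ℝ) ≤ (if t.2.1 ≤ t.1 ∧ t.2.2 ≤ t.1 ∧ 1 ≤ t.2.1 + t.2.2 ∧ 100*t.1 < n then f t else 0) := by
            split_ifs
            · exact hfnonneg t
            · exact le_refl 0
          have g5 : (0:ℝ) ≤ (if t.1 ≤ t.2.1 ∧ t.2.2 ≤ t.2.1 ∧ 1 ≤ t.1 + t.2.2 ∧ 100*t.2.1 < n then f t else 0) := by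
            split_ifs
            · exact hfnonneg t
            · exact le_refl 0
          have g6 : (0:ℝ) ≤ (if t.1 ≤ t.2.2 ∧ t.2.1 ≤ t.2.2 ∧ 1 ≤ t.1 + t.2.1 ∧ 100*t.2.2 < n then f t else 0) := by
            split_ifs
            · exact hfnonneg t
            · exact le_refl 0
          have g7 : (0:ℝ) ≤ (if 1 ≤ t.2.1 + t.2.2 ∧ n ≤ 100*t.1 then f t else 0) := by
            split_ifs
            · exact hfnonneg t
            · exact le_refl 0
          have g8 : (0:ℝ) ≤ (if 1 ≤ t.1 + t.2.2 ∧ n ≤ 100*t.2.1 then f t else 0) := by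
            split_ifs
            · exact hfnonneg t
            · exact le_refl 0
          have g9 : (0:ℝ) ≤ (if 1 ≤ t.1 + t.2.1 ∧ n ≤ 100*t.2.2 then f t else 0) := by
            split_ifs
            · exact hfnonneg t
            · exact le_refl 0
          have hc : (t.2.1 = 0 ∧ t.2.2 = 0) ∨ (t.1 = 0 ∧ t.2.2 = 0) ∨ (t.1 = 0 ∧ t.2.1 = 0) ∨ (t.2.1 ≤ t.1 ∧ t.2.2 ≤ t.1 ∧ 1 ≤ t.2.1 + t.2.2 ∧ 100*t.1 < n) ∨ (t.1 ≤ t.2.1 ∧ t.2.2 ≤ t.2.1 ∧ 1 ≤ t.1 + t.2.2 ∧ 100*t.2.1 < n) ∨ (t.1 ≤ t.2.2 ∧ t.2.1 ≤ t.2.2 ∧ 1 ≤ t.1 + t.2.1 ∧ 100*t.2.2 < n) ∨ (1 ≤ t.2.1 + t.2.2 ∧ n ≤ 100*t.1) ∨ (1 ≤ t.1 + t.2.2 ∧ n ≤ 100*t.2.1) ∨ (1 ≤ t.1 + t.2.1 ∧ n ≤ 100*t.2.2) := by omega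
          rcases hc with h|h|h|h|h|h|h|h|h <;> rw [if_pos h] <;> linarith
      _ = (∑ t ∈ S.filter (fun t => t.2.1 = 0 ∧ t.2.2 = 0), f t) + (∑ t ∈ S.filter (fun t => t.1 = 0 ∧ t.2.2 = 0), f t) + (∑ t ∈ S.filter (fun t => t.1 = 0 ∧ t.2.1 = 0), f t) + (∑ t ∈ S.filter (fun t => t.2.1 ≤ t.1 ∧ t.2.2 ≤ t.1 ∧ 1 ≤ t.2.1 + t.2.2 ∧ 100*t.1 < n), f t) + (∑ t ∈ S.filter (fun t => t.1 ≤ t.2.1 ∧ t.2.2 ≤ t.2.1 ∧ 1 ≤ t.1 + t.2.2 ∧ 100*t.2.1 < n), f t) + (∑ t ∈ S.filter (fun t => t.1 ≤ t.2.2 ∧ t.2.1 ≤ t.2.2 ∧ 1 ≤ t.1 + t.2.1 ∧ 100*t.2.2 < n), f t) + (∑ t ∈ S.filter (fun t => 1 ≤ t.2.1 + t.2.2 ∧ n ≤ 100*t.1), f t) + (∑ t ∈ S.filter (fun t => 1 ≤ t.1 + t.2.2 ∧ n ≤ 100*t.2.1), f t) + (∑ t ∈ S.filter (fun t => 1 ≤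 t.1 + t.2.1 ∧ n ≤ 100*t.2.2), f t) := by
          simp only [Finset.sum_add_distrib, Finset.sum_filter]
  have hsubP : ∀ (c : ℕ×ℕ×ℕ → Prop) (inst : DecidablePred c), S.filter c ⊆ A ×ˢ A ×ˢ A := by
    intro c inst
    refine (Finset.filter_subset _ _).trans ?_
    rw [hS]
    exact Finset.filter_subset _ _
  have hcardsum : ∀ (c : ℕ×ℕ×ℕ → Prop) (inst : DecidablePred c) (M : ℝ), 0 ≤ M →
      (∀ t ∈ S.filter c, f t ≤ M) → ∑ t ∈ S.filter c, f t ≤ ((n:ℝ)+1)^3 * M := by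
    intro c inst M hM0 hM
    have hcard : (S.filter c).card ≤ (n+1) * ((n+1) * (n+1)) := by
      calc (S.filter c).card ≤ (A ×ˢ A ×ˢ A).card := Finset.card_le_card (hsubP c inst)
        _ = (n+1) * ((n+1) * (n+1)) := by
            simp [Finset.card_product, hA, Finset.card_range]
    calc ∑ t ∈ S.filter c, f t ≤ (S.filter c).card • M := Finset.sum_le_card_nsmul _ _ _ hM
      _ = ((S.filter c).card : ℝ) * M := nsmul_eq_mul _ _
      _ ≤ (((n+1) * ((n+1) * (n+1)) : ℕ) : ℝ) * M := by
          apply mul_le_mul_of_nonneg_right ?_ hM0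
          exact_mod_cast hcard
      _ = ((n:ℝ)+1)^3 * M := by push_cast; ring
  -- axis pieces
  have hB1 : ∑ t ∈ S.filter (fun t => t.2.1 = 0 ∧ t.2.2 = 0), f t ≤ (2:ℝ)^n := by
    have hsub : S.filter (fun t => t.2.1 = 0 ∧ t.2.2 = 0) ⊆ A.image (fun b => (b,0,0)) := by
      intro t ht
      obtain ⟨b, c, d⟩ := t
      simp only [hS, Finset.mem_filter, Finset.mem_product, Finset.mem_image] at ht ⊢
      obtain ⟨⟨⟨hb, -, -⟩, -⟩, h1, h2⟩ := ht
      subst h1; subst h2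
      exact ⟨b, hb, rfl⟩
    refine le_trans (Finset.sum_le_sum_of_subset_of_nonneg hsub (fun t _ _ => hfnonneg t)) ?_
    rw [Finset.sum_image (fun a _ b _ h => by simpa using h)]
    have he : ∀ b ∈ A, f (b,0,0) = ((n.choose b : ℕ):ℝ) := by
      intro b _
      simp [hfdef]
    rw [Finset.sum_congr rfl he, hA]
    exact le_of_eq (by exact_mod_cast Nat.sum_range_choose n)
  have hB2 : ∑ t ∈ S.filter (fun t => t.1 = 0 ∧ t.2.2 = 0), f t ≤ (2:ℝ)^n := by
    have hsub : S.filter (fun t => t.1 = 0 ∧ t.2.2 = 0) ⊆ A.image (fun c => (0,c,0)) := by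
      intro t ht
      obtain ⟨b, c, d⟩ := t
      simp only [hS, Finset.mem_filter, Finset.mem_product, Finset.mem_image] at ht ⊢
      obtain ⟨⟨⟨-, hc, -⟩, -⟩, h1, h2⟩ := ht
      subst h1; subst h2
      exact ⟨c, hc, rfl⟩
    refine le_trans (Finset.sum_le_sum_of_subset_of_nonneg hsub (fun t _ _ => hfnonneg t)) ?_
    rw [Finset.sum_image (fun a _ b _ h => by simpa using h)]
    have he : ∀ c ∈ A, f (0,c,0) = ((n.choose c : ℕ):ℝ) := by
      intro c _
      simp [hfdef]
    rw [Finset.sum_congr rfl he, hA]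
    exact le_of_eq (by exact_mod_cast Nat.sum_range_choose n)
  have hB3 : ∑ t ∈ S.filter (fun t => t.1 = 0 ∧ t.2.1 = 0), f t ≤ (2:ℝ)^n := by
    have hsub : S.filter (fun t => t.1 = 0 ∧ t.2.1 = 0) ⊆ A.image (fun d => (0,0,d)) := by
      intro t ht
      obtain ⟨b, c, d⟩ := t
      simp only [hS, Finset.mem_filter, Finset.mem_product, Finset.mem_image] at ht ⊢
      obtain ⟨⟨⟨-, -, hd⟩, -⟩, h1, h2⟩ := ht
      subst h1; subst h2
      exact ⟨d, hd, rfl⟩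
    refine le_trans (Finset.sum_le_sum_of_subset_of_nonneg hsub (fun t _ _ => hfnonneg t)) ?_
    rw [Finset.sum_image (fun a _ b _ h => by simpa using h)]
    have he : ∀ d ∈ A, f (0,0,d) = ((n.choose d : ℕ):ℝ) := by
      intro d _
      simp [hfdef]
    rw [Finset.sum_congr rfl he, hA]
    exact le_of_eq (by exact_mod_cast Nat.sum_range_choose n)
  -- small pieces
  have hsmall : ∀ t : ℕ×ℕ×ℕ, t.1 ≤ n/100 → t.2.1 ≤ n/100 → t.2.2 ≤ n/100 →
      f t ≤ (545:ℝ)^(3*(n/100)) := by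
    intro t hb hc hd
    have hKn : n/100 ≤ n := Nat.div_le_self n 100
    have e1 : ((n.choose t.1 : ℕ):ℝ) ≤ (545:ℝ)^(n/100) :=
      le_trans (choose_le_pow_div (le_refl n) t.1)
        (le_trans (pow_div_factorial_mono n (n/100) hKn t.1 hb) (kappa_le hn100))
    have e2 : (((n - t.1).choose t.2.1 : ℕ):ℝ) ≤ (545:ℝ)^(n/100) :=
      le_trans (choose_le_pow_div (Nat.sub_le n t.1) t.2.1)
        (le_trans (pow_div_factorial_mono n (n/100) hKn t.2.1 hc) (kappa_le hn100))
    have e3 : (((n - t.1 - t.2.1).choose t.2.2 : ℕ):ℝ) ≤ (545:ℝ)^(n/100) :=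
      le_trans (choose_le_pow_div ((Nat.sub_le _ _).trans (Nat.sub_le _ _)) t.2.2)
        (le_trans (pow_div_factorial_mono n (n/100) hKn t.2.2 hd) (kappa_le hn100))
    have e4 : x ^ (t.1 * t.2.1 + t.1 * t.2.2 + t.2.1 * t.2.2) ≤ 1 :=
      pow_le_one₀ hx0 hx1
    have hxp : (0:ℝ) ≤ x ^ (t.1 * t.2.1 + t.1 * t.2.2 + t.2.1 * t.2.2) := pow_nonneg hx0 _
    calc f t ≤ ((545:ℝ)^(n/100)) * ((545:ℝ)^(n/100)) * ((545:ℝ)^(n/100)) * 1 := by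
          simp only [hfdef]
          exact mul_le_mul (mul_le_mul (mul_le_mul e1 e2 (by positivity) (by positivity))
            e3 (by positivity) (by positivity)) e4 hxp (by positivity)
      _ = (545:ℝ)^(3*(n/100)) := by
          rw [mul_one, ← pow_add, ← pow_add]
          congr 1
          ring
  have hB4 : ∑ t ∈ S.filter (fun t => t.2.1 ≤ t.1 ∧ t.2.2 ≤ t.1 ∧ 1 ≤ t.2.1 + t.2.2 ∧ 100*t.1 < n), f t
      ≤ ((n:ℝ)+1)^3 * (545:ℝ)^(3*(n/100)) := by
    apply hcardsum _ _ _ (by positivity)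
    intro t ht
    rw [Finset.mem_filter] at ht
    obtain ⟨hc1, hc2, hc3, hc4⟩ := ht.2
    exact hsmall t (by omega) (by omega) (by omega)
  have hB5 : ∑ t ∈ S.filter (fun t => t.1 ≤ t.2.1 ∧ t.2.2 ≤ t.2.1 ∧ 1 ≤ t.1 + t.2.2 ∧ 100*t.2.1 < n), f t
      ≤ ((n:ℝ)+1)^3 * (545:ℝ)^(3*(n/100)) := by
    apply hcardsum _ _ _ (by positivity)
    intro t ht
    rw [Finset.mem_filter] at ht
    obtain ⟨hc1, hc2, hc3, hc4⟩ := ht.2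
    exact hsmall t (by omega) (by omega) (by omega)
  have hB6 : ∑ t ∈ S.filter (fun t => t.1 ≤ t.2.2 ∧ t.2.1 ≤ t.2.2 ∧ 1 ≤ t.1 + t.2.1 ∧ 100*t.2.2 < n), f t
      ≤ ((n:ℝ)+1)^3 * (545:ℝ)^(3*(n/100)) := by
    apply hcardsum _ _ _ (by positivity)
    intro t ht
    rw [Finset.mem_filter] at ht
    obtain ⟨hc1, hc2, hc3, hc4⟩ := ht.2
    exact hsmall t (by omega) (by omega) (by omega)
  -- large pieces
  have hq0 : (0:ℝ) ≤ ((n:ℝ)^8)⁻¹ := by positivity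
  have hB7 : ∑ t ∈ S.filter (fun t => 1 ≤ t.2.1 + t.2.2 ∧ n ≤ 100*t.1), f t
      ≤ ((n:ℝ)+1)^3 * ((2:ℝ)^n * ((n:ℝ)^7)⁻¹) := by
    apply hcardsum _ _ _ (by positivity)
    intro t ht
    rw [Finset.mem_filter] at ht
    obtain ⟨htS, hcd1, hbL⟩ := ht
    have hxb := key_xb t.1 hbL
    have hxe : x ^ (t.1*t.2.1 + t.1*t.2.2 + t.2.1*t.2.2) ≤ (((n:ℝ)^8)⁻¹)^(t.2.1+t.2.2) := by
      calc x ^ (t.1*t.2.1 + t.1*t.2.2 + t.2.1*t.2.2) ≤ x ^ (t.1*(t.2.1+t.2.2)) :=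
            pow_le_pow_of_le_one hx0 hx1 (by rw [Nat.mul_add]; exact Nat.le_add_right _ _)
        _ = (x ^ t.1)^(t.2.1+t.2.2) := by rw [← pow_mul]
        _ ≤ (((n:ℝ)^8)⁻¹)^(t.2.1+t.2.2) := pow_le_pow_left₀ (pow_nonneg hx0 _) hxb _
    have hb2 : ((n.choose t.1 : ℕ):ℝ) ≤ (2:ℝ)^n := hchoose2 n t.1 (le_refl n)
    have hc2 : (((n-t.1).choose t.2.1 : ℕ):ℝ) ≤ (n:ℝ)^t.2.1 := hchoose_pow _ _ (Nat.sub_le n t.1)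
    have hd2 : (((n-t.1-t.2.1).choose t.2.2 : ℕ):ℝ) ≤ (n:ℝ)^t.2.2 :=
      hchoose_pow _ _ ((Nat.sub_le _ _).trans (Nat.sub_le _ _))
    calc f t ≤ (2:ℝ)^n * ((n:ℝ)^t.2.1) * ((n:ℝ)^t.2.2) * (((n:ℝ)^8)⁻¹)^(t.2.1+t.2.2) := by
          simp only [hfdef]
          exact mul_le_mul (mul_le_mul (mul_le_mul hb2 hc2 (by positivity) (by positivity))
            hd2 (by positivity) (by positivity)) hxe (pow_nonneg hx0 _) (by positivity)
      _ = (2:ℝ)^n * ((n:ℝ)^t.2.1 * (n:ℝ)^t.2.2 * (((n:ℝ)^8)⁻¹)^(t.2.1+t.2.2)) := by ring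
      _ = (2:ℝ)^n * ((((n:ℝ)^7)⁻¹)^(t.2.1+t.2.2)) := by rw [hmul7]
      _ ≤ (2:ℝ)^n * ((n:ℝ)^7)⁻¹ := mul_le_mul_of_nonneg_left (hpow7le _ hcd1) (by positivity)
  have hB8 : ∑ t ∈ S.filter (fun t => 1 ≤ t.1 + t.2.2 ∧ n ≤ 100*t.2.1), f t
      ≤ ((n:ℝ)+1)^3 * ((2:ℝ)^n * ((n:ℝ)^7)⁻¹) := by
    apply hcardsum _ _ _ (by positivity)
    intro t ht
    rw [Finset.mem_filter] at ht
    obtain ⟨htS, hbd1, hcL⟩ := ht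
    have hxb := key_xb t.2.1 hcL
    have hxe : x ^ (t.1*t.2.1 + t.1*t.2.2 + t.2.1*t.2.2) ≤ (((n:ℝ)^8)⁻¹)^(t.1+t.2.2) := by
      calc x ^ (t.1*t.2.1 + t.1*t.2.2 + t.2.1*t.2.2) ≤ x ^ (t.2.1*(t.1+t.2.2)) := by
            apply pow_le_pow_of_le_one hx0 hx1
            rw [Nat.mul_add, Nat.mul_comm t.2.1 t.1]
            exact Nat.add_le_add (Nat.le_add_right _ _) (le_refl _)
        _ = (x ^ t.2.1)^(t.1+t.2.2) := by rw [← pow_mul]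
        _ ≤ (((n:ℝ)^8)⁻¹)^(t.1+t.2.2) := pow_le_pow_left₀ (pow_nonneg hx0 _) hxb _
    have hb2 : ((n.choose t.1 : ℕ):ℝ) ≤ (n:ℝ)^t.1 := hchoose_pow _ _ (le_refl n)
    have hc2 : (((n-t.1).choose t.2.1 : ℕ):ℝ) ≤ (2:ℝ)^n := hchoose2 _ _ (Nat.sub_le n t.1)
    have hd2 : (((n-t.1-t.2.1).choose t.2.2 : ℕ):ℝ) ≤ (n:ℝ)^t.2.2 :=
      hchoose_pow _ _ ((Nat.sub_le _ _).trans (Nat.sub_le _ _))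
    calc f t ≤ ((n:ℝ)^t.1) * (2:ℝ)^n * ((n:ℝ)^t.2.2) * (((n:ℝ)^8)⁻¹)^(t.1+t.2.2) := by
          simp only [hfdef]
          exact mul_le_mul (mul_le_mul (mul_le_mul hb2 hc2 (by positivity) (by positivity))
            hd2 (by positivity) (by positivity)) hxe (pow_nonneg hx0 _) (by positivity)
      _ = (2:ℝ)^n * ((n:ℝ)^t.1 * (n:ℝ)^t.2.2 * (((n:ℝ)^8)⁻¹)^(t.1+t.2.2)) := by ring
      _ = (2:ℝ)^n * ((((n:ℝ)^7)⁻¹)^(t.1+t.2.2)) := by rw [hmul7]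
      _ ≤ (2:ℝ)^n * ((n:ℝ)^7)⁻¹ := mul_le_mul_of_nonneg_left (hpow7le _ hbd1) (by positivity)
  have hB9 : ∑ t ∈ S.filter (fun t => 1 ≤ t.1 + t.2.1 ∧ n ≤ 100*t.2.2), f t
      ≤ ((n:ℝ)+1)^3 * ((2:ℝ)^n * ((n:ℝ)^7)⁻¹) := by
    apply hcardsum _ _ _ (by positivity)
    intro t ht
    rw [Finset.mem_filter] at ht
    obtain ⟨htS, hbc1, hdL⟩ := ht
    have hxb := key_xb t.2.2 hdL
    have hxe : x ^ (t.1*t.2.1 + t.1*t.2.2 + t.2.1*t.2.2) ≤ (((n:ℝ)^8)⁻¹)^(t.1+t.2.1) := by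
      calc x ^ (t.1*t.2.1 + t.1*t.2.2 + t.2.1*t.2.2) ≤ x ^ (t.2.2*(t.1+t.2.1)) := by
            apply pow_le_pow_of_le_one hx0 hx1
            rw [Nat.mul_add, Nat.mul_comm t.2.2 t.1, Nat.mul_comm t.2.2 t.2.1]
            exact Nat.add_le_add (Nat.le_add_left _ _) (le_refl _)
        _ = (x ^ t.2.2)^(t.1+t.2.1) := by rw [← pow_mul]
        _ ≤ (((n:ℝ)^8)⁻¹)^(t.1+t.2.1) := pow_le_pow_left₀ (pow_nonneg hx0 _) hxb _
    have hb2 : ((n.choose t.1 : ℕ):ℝ) ≤ (n:ℝ)^t.1 := hchoose_pow _ _ (le_refl n)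
    have hc2 : (((n-t.1).choose t.2.1 : ℕ):ℝ) ≤ (n:ℝ)^t.2.1 := hchoose_pow _ _ (Nat.sub_le n t.1)
    have hd2 : (((n-t.1-t.2.1).choose t.2.2 : ℕ):ℝ) ≤ (2:ℝ)^n :=
      hchoose2 _ _ ((Nat.sub_le _ _).trans (Nat.sub_le _ _))
    calc f t ≤ ((n:ℝ)^t.1) * ((n:ℝ)^t.2.1) * (2:ℝ)^n * (((n:ℝ)^8)⁻¹)^(t.1+t.2.1) := by
          simp only [hfdef]
          exact mul_le_mul (mul_le_mul (mul_le_mul hb2 hc2 (by positivity) (by positivity))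
            hd2 (by positivity) (by positivity)) hxe (pow_nonneg hx0 _) (by positivity)
      _ = (2:ℝ)^n * ((n:ℝ)^t.1 * (n:ℝ)^t.2.1 * (((n:ℝ)^8)⁻¹)^(t.1+t.2.1)) := by ring
      _ = (2:ℝ)^n * ((((n:ℝ)^7)⁻¹)^(t.1+t.2.1)) := by rw [hmul7]
      _ ≤ (2:ℝ)^n * ((n:ℝ)^7)⁻¹ := mul_le_mul_of_nonneg_left (hpow7le _ hbc1) (by positivity)
  -- numeric bound for large pieces
  have hnum : ((n:ℝ)+1)^3 * ((2:ℝ)^n * ((n:ℝ)^7)⁻¹) ≤ (2:ℝ)^n * (3:ℝ)⁻¹ := by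
    have h7 : (0:ℝ) < (n:ℝ)^7 := by positivity
    have h2 : ((n:ℝ)+1)^3 ≤ (2*(n:ℝ))^3 := pow_le_pow_left₀ (by positivity) (by linarith) 3
    have h4 : ((n:ℝ)+1)^3 ≤ 8*(n:ℝ)^3 := by nlinarith
    have h6 : (100:ℝ)^4 ≤ (n:ℝ)^4 := pow_le_pow_left₀ (by norm_num) hn100R 4
    have h5 : 24*(n:ℝ)^3 ≤ (n:ℝ)^7 := by nlinarith [mul_le_mul_of_nonneg_right h6 (pow_nonneg hn0.le 3), pow_nonneg hn0.le 3]
    calc ((n:ℝ)+1)^3 * ((2:ℝ)^n * ((n:ℝ)^7)⁻¹) = (2:ℝ)^n * (((n:ℝ)+1)^3 * ((n:ℝ)^7)⁻¹) := by ring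
      _ ≤ (2:ℝ)^n * (3:ℝ)⁻¹ := by
          apply mul_le_mul_of_nonneg_left ?_ (by positivity)
          rw [← div_eq_mul_inv, div_le_iff₀ h7]
          linarith
  have hNn' := hN n hNn
  linarith [hsplit, hB1, hB2, hB3, hB4, hB5, hB6, hB7, hB8, hB9, hNn', hnum]
end

section
/- Let x, y ∈ {0,1}^n. For 1 ≤ i < j ≤ n define the integer F_{ij}(x,y) = x_i·y_j + y_i·x_j − 2·y_i·y_j (with the bits treated as integers 0 or 1). Set b = #{i : x_i = 0 and y_i = 1}, c = #{i : x_i = 1 and y_i = 0}, d = #{i : x_i = 1 and y_i = 1}. Then the number of pairs (i,j) with i < j and F_{ij}(x,y) ≠ 0 equals C(b,2) + bc + bd + cd. -/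
/-!
Classify each index `i` by its bit pair `(x i, y i)`. The value of `F_{ij}` depends only on the
classes of `i` and `j`, and it is nonzero exactly for the class pairs `{01, 01}`, `{01, 10}`,
`{01, 11}`, `{10, 11}`. Counting ordered pairs `(i, j)` (including `i = j`) is then a sum of products
of class sizes, `b² + 2bc + 2bd + 2cd`; by the symmetry of `F` this is twice the number of pairs
`i < j` plus the `b` diagonal pairs, and `b² = 2·C(b,2) + b` finishes the count.
-/

open Finset

theorem two_mul_card_filter_lt_add_card_filter_diag {α : Type*} [Fintype α] [LinearOrder α]
    (R : α → α → Prop) [DecidableRel R] (hR : ∀ i j, R i j → R j i) :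
    2 * #{q : α × α | q.1 < q.2 ∧ R q.1 q.2} + #{i | R i i} = #{q : α × α | R q.1 q.2} := by
  have hsplit : #{q : α × α | R q.1 q.2} = #{q : α × α | q.1 < q.2 ∧ R q.1 q.2}
      + #{q : α × α | q.2 < q.1 ∧ R q.1 q.2} + #{q : α × α | q.1 = q.2 ∧ R q.1 q.2} := by
    simp only [card_filter, ← sum_add_distrib]
    refine sum_congr rfl fun q _ => ?_
    rcases lt_trichotomy q.1 q.2 with h | h | h
    · simp [h, h.not_gt, h.ne]
    · simp [h]
    · simp [h, h.not_gt, h.ne']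
  have hswap : #{q : α × α | q.2 < q.1 ∧ R q.1 q.2} = #{q : α × α | q.1 < q.2 ∧ R q.1 q.2} :=
    card_equiv (Equiv.prodComm α α) fun q => by
      simpa [and_comm] using fun _ : q.2 < q.1 => ⟨hR _ _, hR _ _⟩
  have hdiag : #{q : α × α | q.1 = q.2 ∧ R q.1 q.2} = #{i | R i i} := by
    refine card_nbij' Prod.fst (fun i => (i, i)) ?_ ?_ ?_ ?_ <;>
      simp +contextual [Set.MapsTo, Set.LeftInvOn, Set.RightInvOn, Prod.ext_iff]
  rw [hsplit, hswap, hdiag, two_mul]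

theorem card_filter_comp_eq_sum_card_mul_card {ι κ : Type*} [Fintype ι] [Fintype κ] [DecidableEq κ]
    (t : ι → κ) (R : κ → κ → Prop) [DecidableRel R] :
    #{q : ι × ι | R (t q.1) (t q.2)}
      = ∑ p : κ × κ with R p.1 p.2, #{i | t i = p.1} * #{i | t i = p.2} := by
  rw [card_eq_sum_card_fiberwise (f := Prod.map t t) (t := {p : κ × κ | R p.1 p.2})
    (by intro q hq; simpa using hq)]
  refine sum_congr rfl fun p hp => ?_
  rw [← card_product, ← filter_product]
  congr 1
  ext ⟨i, j⟩
  simp only [mem_filter, mem_univ, true_and] at hp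
  simp only [mem_filter, mem_product, mem_univ, true_and, Prod.map, Prod.ext_iff]
  exact ⟨And.right, fun h => ⟨h.1 ▸ h.2 ▸ hp, h⟩⟩

theorem mul_self_eq_two_mul_choose_two_add (b : ℕ) : b * b = 2 * b.choose 2 + b := by
  induction b with
  | zero => rfl
  | succ b ih => rw [Nat.choose_succ_succ', Nat.choose_one_right]; linarith

/-- `F_{ij}(x, y)` as a function of the bit pairs `(x i, y i)` and `(x j, y j)`. -/
def pairF (p q : ZMod 2 × ZMod 2) : ℤ :=
  p.1.val * q.2.val + p.2.val * q.1.val - 2 * p.2.val * q.2.val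

theorem pairF_comm (p q : ZMod 2 × ZMod 2) : pairF p q = pairF q p := by
  unfold pairF; ring

theorem filter_pairF_ne_zero :
    ({p | pairF p.1 p.2 ≠ 0} : Finset ((ZMod 2 × ZMod 2) × (ZMod 2 × ZMod 2))) =
      {((0, 1), (0, 1)), ((0, 1), (1, 0)), ((1, 0), (0, 1)), ((0, 1), (1, 1)), ((1, 1), (0, 1)),
        ((1, 0), (1, 1)), ((1, 1), (1, 0))} := by
  decide

theorem pairF_self_ne_zero_iff (p : ZMod 2 × ZMod 2) : pairF p p ≠ 0 ↔ p = (0, 1) := by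
  revert p; decide

/-- for bit strings `x, y ∈ {0,1}^n`, with
`F_{ij}(x,y) = x_i·y_j + y_i·x_j − 2·y_i·y_j` (bits as integers), the number of pairs
`i < j` with `F_{ij}(x,y) ≠ 0` equals `C(b,2) + bc + bd + cd`, where
`b = #{i : x_i = 0, y_i = 1}`, `c = #{i : x_i = 1, y_i = 0}`, `d = #{i : x_i = 1, y_i = 1}`. -/
theorem count_nonzero_F (n : ℕ) (x y : Fin n → ZMod 2) :
    ((Finset.univ : Finset (Fin n × Fin n)).filter (fun q => q.1 < q.2 ∧
        ((x q.1).val * (y q.2).val + (y q.1).val * (x q.2).val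
          - 2 * (y q.1).val * (y q.2).val : ℤ) ≠ 0)).card
      = ((Finset.univ.filter (fun i => x i = 0 ∧ y i = 1)).card).choose 2
        + (Finset.univ.filter (fun i => x i = 0 ∧ y i = 1)).card
            * (Finset.univ.filter (fun i => x i = 1 ∧ y i = 0)).card
        + (Finset.univ.filter (fun i => x i = 0 ∧ y i = 1)).card
            * (Finset.univ.filter (fun i => x i = 1 ∧ y i = 1)).card
        + (Finset.univ.filter (fun i => x i = 1 ∧ y i = 0)).card
            * (Finset.univ.filter (fun i => x i = 1 ∧ y i = 1)).card := by
  let t : Fin n → ZMod 2 × ZMod 2 := fun i => (x i, y i)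
  have hclass (a b : ZMod 2) : #{i | t i = (a, b)} = #{i | x i = a ∧ y i = b} := by
    simp [t, Prod.ext_iff]
  have key := two_mul_card_filter_lt_add_card_filter_diag (fun i j => pairF (t i) (t j) ≠ 0)
    (fun i j h => by rwa [pairF_comm])
  rw [card_filter_comp_eq_sum_card_mul_card t (fun p q => pairF p q ≠ 0), filter_pairF_ne_zero] at key
  repeat rw [sum_insert (by decide)] at key
  simp only [sum_singleton, pairF_self_ne_zero_iff, hclass] at key
  change #{q : Fin n × Fin n | q.1 < q.2 ∧ pairF (t q.1) (t q.2) ≠ 0} = _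
  linarith [mul_self_eq_two_mul_choose_two_add #{i | x i = 0 ∧ y i = 1}]
end

section
/- Let n ≥ 2 and γ > 0 with p := γ·(ln n)/n ≤ 1. Consider the random graph G on vertex set {1,...,n} in which each of the C(n,2) possible edges is present independently with probability p, and let Δ(G) denote the maximum vertex degree of G. Then Pr[Δ(G) ≥ 2γ·ln n] ≤ n^(1−γ/4). -/
open Finset

noncomputable section

/-- The probability of the edge configuration `ω`: each edge is present independently
with probability `p`. -/
def graphWeight (n : ℕ) (p : ℝ) (ω : Pairs n → Bool) : ℝ :=
  ∏ e : Pairs n, if ω e then p else 1 - p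

/-- `X_{kj}` for arbitrary vertices `k ≠ j` (symmetrised edge indicator). -/
def edgeInd {n : ℕ} (ω : Pairs n → Bool) (k j : Fin n) : Bool :=
  if h : k < j then ω ⟨(k, j), h⟩ else if h' : j < k then ω ⟨(j, k), h'⟩ else false

/-- The degree of vertex `k` in the graph with edge configuration `ω`. -/
def deg {n : ℕ} (ω : Pairs n → Bool) (k : Fin n) : ℕ :=
  (Finset.univ.filter (fun j => edgeInd ω k j = true)).card

/-- The maximum degree of the graph with edge configuration `ω`. -/
def maxDeg {n : ℕ} (ω : Pairs n → Bool) : ℕ :=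
  Finset.univ.sup (deg ω)

section FiniteSums

variable {α ι : Type*}

theorem sum_filter_le_rpow_neg_mul_sum_mul_pow (s : Finset α) {w : α → ℝ}
    (hw : ∀ x ∈ s, 0 ≤ w x) (f : α → ℕ) {b : ℝ} (hb : 1 ≤ b) (t : ℝ) :
    ∑ x ∈ s with t ≤ (f x : ℝ), w x ≤ b ^ (-t) * ∑ x ∈ s, w x * b ^ f x := by
  rw [Finset.mul_sum]
  calc ∑ x ∈ s with t ≤ (f x : ℝ), w x
      ≤ ∑ x ∈ s with t ≤ (f x : ℝ), b ^ (-t) * (w x * b ^ f x) := by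
        refine Finset.sum_le_sum fun x hx => ?_
        obtain ⟨hxs, htx⟩ := Finset.mem_filter.1 hx
        have hscale : 1 ≤ b ^ (-t) * b ^ f x := by
          rw [← Real.rpow_natCast, ← Real.rpow_add (by linarith)]
          exact Real.one_le_rpow hb (by linarith)
        calc w x ≤ w x * (b ^ (-t) * b ^ f x) := le_mul_of_one_le_right (hw x hxs) hscale
          _ = b ^ (-t) * (w x * b ^ f x) := by ring
    _ ≤ ∑ x ∈ s, b ^ (-t) * (w x * b ^ f x) :=
        Finset.sum_le_sum_of_subset_of_nonneg (Finset.filter_subset _ _) fun x hx _ => by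
          have := hw x hx
          positivity

theorem sum_filter_le_sum_sum_filter_of_imp_exists (s : Finset ι) (u : Finset α)
    (Q : α → Prop) [DecidablePred Q] (P : ι → α → Prop) [∀ i, DecidablePred (P i)]
    (hQP : ∀ x ∈ u, Q x → ∃ i ∈ s, P i x) {w : α → ℝ} (hw : ∀ x ∈ u, 0 ≤ w x) :
    ∑ x ∈ u with Q x, w x ≤ ∑ i ∈ s, ∑ x ∈ u with P i x, w x := by
  simp_rw [Finset.sum_filter]
  rw [Finset.sum_comm]
  refine Finset.sum_le_sum fun x hx => ?_
  split_ifs with hQ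
  · obtain ⟨i, hi, hPi⟩ := hQP x hx hQ
    calc w x = if P i x then w x else 0 := (if_pos hPi).symm
      _ ≤ _ := Finset.single_le_sum (f := fun i => if P i x then w x else 0)
          (fun j _ => by split_ifs <;> simp [hw x hx]) hi
  · exact Finset.sum_nonneg fun j _ => by split_ifs <;> simp [hw x hx]

end FiniteSums

section Incidence

variable {n : ℕ}

def incidentEdges (k : Fin n) : Finset (Pairs n) := {e | e.1.1 = k ∨ e.1.2 = k}

def otherEnd (k : Fin n) (e : Pairs n) : Fin n := if e.1.1 = k then e.1.2 else e.1.1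

theorem otherEnd_injOn (k : Fin n) : Set.InjOn (otherEnd k) (incidentEdges k) := by
  rintro ⟨⟨a, b⟩, hab⟩ he ⟨⟨a', b'⟩, hab'⟩ he' h
  simp only [incidentEdges, Finset.coe_filter, Finset.mem_univ, true_and,
    Set.mem_ofPred_eq] at he he'
  simp only [otherEnd] at h
  simp only [Subtype.mk.injEq, Prod.mk.injEq]
  dsimp only at hab hab' he he' h
  split_ifs at h <;> omega

theorem card_incidentEdges_le (k : Fin n) : #(incidentEdges k) ≤ n := by
  simpa using Finset.card_le_card_of_injOn (otherEnd k) (fun e _ => Finset.mem_univ _)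
    (otherEnd_injOn k)

theorem edgeInd_otherEnd (ω : Pairs n → Bool) {k : Fin n} {e : Pairs n}
    (he : e ∈ incidentEdges k) : edgeInd ω k (otherEnd k e) = ω e := by
  obtain ⟨⟨a, b⟩, hab⟩ := e
  simp only [incidentEdges, Finset.mem_filter, Finset.mem_univ, true_and] at he
  rcases he with rfl | rfl
  · simp [otherEnd, edgeInd, hab]
  · simp [otherEnd, edgeInd, hab, hab.ne, not_lt.2 hab.le]

theorem deg_eq_card_filter_incidentEdges (ω : Pairs n → Bool) (k : Fin n) :
    deg ω k = #{e ∈ incidentEdges k | ω e} := by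
  rw [deg]
  refine (Finset.card_bij (fun e _ => otherEnd k e) (fun e he => ?_) (fun e he e' he' h => ?_)
    fun j hj => ?_).symm
  · obtain ⟨hek, hωe⟩ := Finset.mem_filter.1 he
    simpa [edgeInd_otherEnd ω hek] using hωe
  · exact otherEnd_injOn k (Finset.mem_filter.1 he).1 (Finset.mem_filter.1 he').1 h
  · replace hj := (Finset.mem_filter.1 hj).2
    unfold edgeInd at hj
    split_ifs at hj with hkj hjk
    · exact ⟨⟨(k, j), hkj⟩, by simp [incidentEdges, hj], by simp [otherEnd]⟩
    · exact ⟨⟨(j, k), hjk⟩, by simp [incidentEdges, hj], by simp [otherEnd, hjk.ne]⟩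

theorem exists_le_deg_of_le_maxDeg [NeZero n] {ω : Pairs n → Bool} {t : ℝ}
    (ht : t ≤ (maxDeg ω : ℝ)) : ∃ k ∈ (Finset.univ : Finset (Fin n)), t ≤ (deg ω k : ℝ) := by
  obtain ⟨k, hk, hmax⟩ := Finset.exists_mem_eq_sup _ Finset.univ_nonempty (deg ω)
  exact ⟨k, hk, by rwa [maxDeg, hmax] at ht⟩

end Incidence

section Moments

variable {n : ℕ} {p : ℝ}

theorem graphWeight_nonneg (hp0 : 0 ≤ p) (hp1 : p ≤ 1) (ω : Pairs n → Bool) :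
    0 ≤ graphWeight n p ω :=
  Finset.prod_nonneg fun e _ => by split <;> linarith

theorem sum_graphWeight_mul_pow_card (p b : ℝ) (S : Finset (Pairs n)) :
    ∑ ω, graphWeight n p ω * b ^ #{e ∈ S | ω e} = (1 - p + p * b) ^ #S := by
  have hfactor : ∀ ω : Pairs n → Bool, graphWeight n p ω * b ^ #{e ∈ S | ω e} =
      ∏ e, (if ω e then p else 1 - p) * (if e ∈ S ∧ ω e then b else 1) := by
    intro ω
    rw [Finset.prod_mul_distrib, ← Finset.prod_filter, Finset.prod_const]
    congr 3
    ext e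
    simp
  have hsum : ∀ e, ∑ x : Bool, (if x then p else 1 - p) * (if e ∈ S ∧ x then b else 1) =
      if e ∈ S then 1 - p + p * b else 1 := by
    intro e
    by_cases he : e ∈ S
    · simp [he]
      ring
    · simp [he]
  simp_rw [hfactor]
  rw [← Fintype.prod_sum fun e (x : Bool) =>
    (if x then p else 1 - p) * (if e ∈ S ∧ x then b else 1)]
  simp_rw [hsum]
  rw [Finset.prod_ite_mem, Finset.univ_inter, Finset.prod_const]

theorem sum_graphWeight_deg_tail_le (hp0 : 0 ≤ p) (hp1 : p ≤ 1) (k : Fin n) (t : ℝ) :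
    ∑ ω with t ≤ (deg ω k : ℝ), graphWeight n p ω ≤ 2 ^ (-t) * (1 + p) ^ n := by
  have hw : ∀ ω ∈ (Finset.univ : Finset (Pairs n → Bool)), 0 ≤ graphWeight n p ω :=
    fun ω _ => graphWeight_nonneg hp0 hp1 ω
  calc ∑ ω with t ≤ (deg ω k : ℝ), graphWeight n p ω
      ≤ 2 ^ (-t) * ∑ ω, graphWeight n p ω * 2 ^ deg ω k :=
        sum_filter_le_rpow_neg_mul_sum_mul_pow _ hw (deg · k) one_le_two t
    _ = 2 ^ (-t) * (1 + p) ^ #(incidentEdges k) := by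
        simp_rw [deg_eq_card_filter_incidentEdges, sum_graphWeight_mul_pow_card]
        ring_nf
    _ ≤ 2 ^ (-t) * (1 + p) ^ n := by
        gcongr
        · linarith
        · exact card_incidentEdges_le k

theorem sum_graphWeight_maxDeg_tail_le [NeZero n] (hp0 : 0 ≤ p) (hp1 : p ≤ 1) (t : ℝ) :
    ∑ ω with t ≤ (maxDeg ω : ℝ), graphWeight n p ω ≤ n * (2 ^ (-t) * (1 + p) ^ n) := by
  calc ∑ ω with t ≤ (maxDeg ω : ℝ), graphWeight n p ω
      ≤ ∑ k, ∑ ω with t ≤ (deg ω k : ℝ), graphWeight n p ω :=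
        sum_filter_le_sum_sum_filter_of_imp_exists _ _ _ (fun k ω => t ≤ (deg ω k : ℝ))
          (fun ω _ => exists_le_deg_of_le_maxDeg) fun ω _ => graphWeight_nonneg hp0 hp1 ω
    _ ≤ ∑ _k : Fin n, 2 ^ (-t) * (1 + p) ^ n :=
        Finset.sum_le_sum fun k _ => sum_graphWeight_deg_tail_le hp0 hp1 k t
    _ = n * (2 ^ (-t) * (1 + p) ^ n) := by simp

end Moments

theorem one_add_pow_le_exp_mul {p : ℝ} (hp : -1 ≤ p) (n : ℕ) : (1 + p) ^ n ≤ Real.exp (p * n) := by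
  rw [mul_comm, Real.exp_nat_mul]
  exact pow_le_pow_left₀ (by linarith) (by linarith [Real.add_one_le_exp p]) n

theorem mul_two_rpow_neg_mul_exp_le {x γ : ℝ} (hx : 1 ≤ x) (hγ : 0 ≤ γ) :
    x * (2 ^ (-(2 * γ * Real.log x)) * Real.exp (γ * Real.log x)) ≤ x ^ (1 - γ / 4) := by
  have hx0 : 0 < x := by linarith
  have hlog : 0 ≤ Real.log x := Real.log_nonneg hx
  calc x * (2 ^ (-(2 * γ * Real.log x)) * Real.exp (γ * Real.log x))
      = Real.exp (Real.log x * (1 + γ - 2 * γ * Real.log 2)) := by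
        rw [Real.rpow_def_of_pos two_pos, ← Real.exp_add]
        nth_rewrite 1 [← Real.exp_log hx0]
        rw [← Real.exp_add]
        ring_nf
    _ ≤ Real.exp (Real.log x * (1 - γ / 4)) :=
        Real.exp_le_exp.2 (by nlinarith [Real.log_two_gt_d9, mul_nonneg hlog hγ])
    _ = x ^ (1 - γ / 4) := (Real.rpow_def_of_pos hx0 _).symm

/-- for `n ≥ 2`, `γ > 0` with `p = γ·(ln n)/n ≤ 1`, the probability that the
random graph `G(n, p)` has maximum degree at least `2γ·ln n` is at most `n^(1−γ/4)`. -/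
theorem maxDeg_tail_bound (n : ℕ) (hn : 2 ≤ n) (γ : ℝ) (hγ : 0 < γ)
    (hp1 : γ * Real.log n / n ≤ 1) :
    ∑ ω ∈ (Finset.univ : Finset (Pairs n → Bool)).filter
        (fun ω => 2 * γ * Real.log n ≤ (maxDeg ω : ℝ)),
      graphWeight n (γ * Real.log n / n) ω
      ≤ (n : ℝ) ^ ((1 : ℝ) - γ / 4) := by
  have hn1 : (1 : ℝ) ≤ n := by exact_mod_cast hn.trans' one_le_two
  have : NeZero n := ⟨by omega⟩
  have hp0 : 0 ≤ γ * Real.log n / n := by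
    have := Real.log_nonneg hn1
    positivity
  calc _ ≤ n * (2 ^ (-(2 * γ * Real.log n)) * (1 + γ * Real.log n / n) ^ n) :=
        sum_graphWeight_maxDeg_tail_le hp0 hp1 _
    _ ≤ n * (2 ^ (-(2 * γ * Real.log n)) * Real.exp (γ * Real.log n)) := by
        gcongr
        calc (1 + γ * Real.log n / n) ^ n ≤ Real.exp (γ * Real.log n / n * n) :=
              one_add_pow_le_exp_mul (by linarith) n
          _ = Real.exp (γ * Real.log n) := by rw [div_mul_cancel₀ _ (by positivity)]
    _ ≤ _ := mul_two_rpow_neg_mul_exp_le hn1 hγ.le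

end
end

section
/- Let n ≥ 0 and let p ∈ ℝ^({0,1}^n) satisfy Σ_x p_x > 0. Then the vector Fix(p) satisfies: (i) for every x with p_x ≥ 0, 0 ≤ Fix(p)_x ≤ p_x; (ii) for every x with p_x < 0, Fix(p)_x = 0; and (iii) Σ_x Fix(p)_x = Σ_x p_x. -/
open Finset

noncomputable section

/-- The recursive procedure `fixVec` on vectors `p ∈ ℝ^({0,1}^n)` (only meaningful when
`Σ p > 0`).  Writing `p = (a, b)` for the restrictions of `p` to strings starting with
`0` and `1`: if both halves have positive sum, fix each half; if only one does, zero the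
other half and rescale the positive one so the total sum is preserved. -/
def fixVec : (n : ℕ) → ((Fin n → Bool) → ℝ) → ((Fin n → Bool) → ℝ)
  | 0, p => p
  | n + 1, p =>
    let a : (Fin n → Bool) → ℝ := fun x => p (Fin.cons false x)
    let b : (Fin n → Bool) → ℝ := fun x => p (Fin.cons true x)
    let Sa := ∑ x : Fin n → Bool, a x
    let Sb := ∑ x : Fin n → Bool, b x
    let Sp := ∑ x : Fin (n + 1) → Bool, p x
    fun x =>
      if 0 < Sa ∧ 0 < Sb then
        (if x 0 = false then fixVec n a (Fin.tail x) else fixVec n b (Fin.tail x))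
      else if 0 < Sa then
        (if x 0 = false then (Sp / Sa) * fixVec n a (Fin.tail x) else 0)
      else
        (if x 0 = true then (Sp / Sb) * fixVec n b (Fin.tail x) else 0)

private lemma sum_split {n : ℕ} (p : (Fin (n+1) → Bool) → ℝ) :
    ∑ x : Fin (n+1) → Bool, p x
      = (∑ t : Fin n → Bool, p (Fin.cons false t))
        + ∑ t : Fin n → Bool, p (Fin.cons true t) := by
  rw [← (Fin.consEquiv (fun _ : Fin (n+1) => Bool)).sum_comp p]
  rw [Fintype.sum_prod_type, Fintype.sum_bool, add_comm]
  rfl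

/-- if `Σ_x p_x > 0` then (i) `0 ≤ fixVec(p)_x ≤ p_x` whenever `p_x ≥ 0`;
(ii) `fixVec(p)_x = 0` whenever `p_x < 0`; (iii) `Σ_x fixVec(p)_x = Σ_x p_x`. -/
theorem Fix_properties (n : ℕ) (p : (Fin n → Bool) → ℝ)
    (hp : 0 < ∑ x : Fin n → Bool, p x) :
    (∀ x, 0 ≤ p x → 0 ≤ fixVec n p x ∧ fixVec n p x ≤ p x) ∧
    (∀ x, p x < 0 → fixVec n p x = 0) ∧
    (∑ x : Fin n → Bool, fixVec n p x = ∑ x : Fin n → Bool, p x) := by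
  induction n with
  | zero =>
    refine ⟨fun x hx => ⟨hx, le_refl _⟩, fun x hx => ?_, rfl⟩
    have h : ∑ y : Fin 0 → Bool, p y = p x :=
      Finset.sum_eq_single_of_mem x (Finset.mem_univ x)
        (fun b _ hb => absurd (Subsingleton.elim b x) hb)
    rw [h] at hp
    exact absurd hp (not_lt.mpr hx.le)
  | succ n ih =>
    have hsplit := sum_split p
    by_cases hA : 0 < ∑ t : Fin n → Bool, p (Fin.cons false t) <;>
      by_cases hB : 0 < ∑ t : Fin n → Bool, p (Fin.cons true t)
    · -- both positive
      obtain ⟨IHa1, IHa2, IHa3⟩ := ih (fun t => p (Fin.cons false t)) hA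
      obtain ⟨IHb1, IHb2, IHb3⟩ := ih (fun t => p (Fin.cons true t)) hB
      have heval : ∀ x : Fin (n+1) → Bool, fixVec (n+1) p x =
          if x 0 = false then fixVec n (fun t => p (Fin.cons false t)) (Fin.tail x)
          else fixVec n (fun t => p (Fin.cons true t)) (Fin.tail x) := by
        intro x
        simp only [fixVec]
        rw [if_pos ⟨hA, hB⟩]
      have hpx : ∀ x : Fin (n+1) → Bool, p x = p (Fin.cons (x 0) (Fin.tail x)) := by
        intro x; rw [Fin.cons_self_tail]
      refine ⟨fun x hx => ?_, fun x hx => ?_, ?_⟩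
      · rw [heval x]
        cases hx0 : x 0 with
        | false =>
          rw [if_pos rfl]
          have := hpx x; rw [hx0] at this
          exact this ▸ IHa1 (Fin.tail x) (this ▸ hx)
        | true =>
          rw [if_neg (by simp)]
          have := hpx x; rw [hx0] at this
          exact this ▸ IHb1 (Fin.tail x) (this ▸ hx)
      · rw [heval x]
        cases hx0 : x 0 with
        | false =>
          rw [if_pos rfl]
          have := hpx x; rw [hx0] at this
          exact IHa2 (Fin.tail x) (this ▸ hx)
        | true =>
          rw [if_neg (by simp)]
          have := hpx x; rw [hx0] at this
          exact IHb2 (Fin.tail x) (this ▸ hx)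
      · rw [sum_split (fixVec (n+1) p), hsplit]
        congr 1
        · rw [← IHa3]; apply Finset.sum_congr rfl; intro t _
          rw [heval]; simp [Fin.tail_cons]
        · rw [← IHb3]; apply Finset.sum_congr rfl; intro t _
          rw [heval]; simp [Fin.tail_cons]
    · -- Sa > 0, Sb ≤ 0
      push_neg at hB
      obtain ⟨IHa1, IHa2, IHa3⟩ := ih (fun t => p (Fin.cons false t)) hA
      set c := (∑ x : Fin (n+1) → Bool, p x) / (∑ t : Fin n → Bool, p (Fin.cons false t)) with hc
      have hc0 : 0 < c := div_pos hp hA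
      have hc1 : c ≤ 1 := by
        rw [hc, div_le_one hA]; linarith
      have heval : ∀ x : Fin (n+1) → Bool, fixVec (n+1) p x =
          if x 0 = false then c * fixVec n (fun t => p (Fin.cons false t)) (Fin.tail x)
          else 0 := by
        intro x
        simp only [fixVec]
        rw [if_neg (fun h => absurd h.2 (not_lt.mpr hB)), if_pos hA]
      have hpx : ∀ x : Fin (n+1) → Bool, p x = p (Fin.cons (x 0) (Fin.tail x)) := by
        intro x; rw [Fin.cons_self_tail]
      refine ⟨fun x hx => ?_, fun x hx => ?_, ?_⟩
      · rw [heval x]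
        cases hx0 : x 0 with
        | false =>
          rw [if_pos rfl]
          have := hpx x; rw [hx0] at this
          have h1 := IHa1 (Fin.tail x) (this ▸ hx)
          constructor
          · exact mul_nonneg hc0.le h1.1
          · calc c * fixVec n (fun t => p (Fin.cons false t)) (Fin.tail x)
                ≤ 1 * fixVec n (fun t => p (Fin.cons false t)) (Fin.tail x) :=
                  mul_le_mul_of_nonneg_right hc1 h1.1
              _ = _ := one_mul _
              _ ≤ p x := this ▸ h1.2
        | true =>
          rw [if_neg (by simp)]
          exact ⟨le_refl 0, hx⟩
      · rw [heval x]
        cases hx0 : x 0 with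
        | false =>
          rw [if_pos rfl]
          have := hpx x; rw [hx0] at this
          rw [IHa2 (Fin.tail x) (this ▸ hx), mul_zero]
        | true =>
          rw [if_neg (by simp)]
      · rw [sum_split (fixVec (n+1) p)]
        have e1 : ∑ t : Fin n → Bool, fixVec (n+1) p (Fin.cons false t)
            = c * ∑ t : Fin n → Bool, fixVec n (fun t => p (Fin.cons false t)) t := by
          rw [Finset.mul_sum]; apply Finset.sum_congr rfl; intro t _
          rw [heval]; simp [Fin.tail_cons]
        have e2 : ∑ t : Fin n → Bool, fixVec (n+1) p (Fin.cons true t) = 0 := by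
          apply Finset.sum_eq_zero; intro t _
          rw [heval]; simp
        rw [e1, e2, IHa3, add_zero, hc, div_mul_cancel₀ _ (ne_of_gt hA)]
    · -- Sa ≤ 0, Sb > 0
      push_neg at hA
      obtain ⟨IHb1, IHb2, IHb3⟩ := ih (fun t => p (Fin.cons true t)) hB
      set c := (∑ x : Fin (n+1) → Bool, p x) / (∑ t : Fin n → Bool, p (Fin.cons true t)) with hc
      have hc0 : 0 < c := div_pos hp hB
      have hc1 : c ≤ 1 := by
        rw [hc, div_le_one hB]; linarith
      have heval : ∀ x : Fin (n+1) → Bool, fixVec (n+1) p x =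
          if x 0 = true then c * fixVec n (fun t => p (Fin.cons true t)) (Fin.tail x)
          else 0 := by
        intro x
        simp only [fixVec]
        rw [if_neg (fun h => absurd h.1 (not_lt.mpr hA)), if_neg (not_lt.mpr hA)]
      have hpx : ∀ x : Fin (n+1) → Bool, p x = p (Fin.cons (x 0) (Fin.tail x)) := by
        intro x; rw [Fin.cons_self_tail]
      refine ⟨fun x hx => ?_, fun x hx => ?_, ?_⟩
      · rw [heval x]
        cases hx0 : x 0 with
        | true =>
          rw [if_pos rfl]
          have := hpx x; rw [hx0] at this
          have h1 := IHb1 (Fin.tail x) (this ▸ hx)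
          constructor
          · exact mul_nonneg hc0.le h1.1
          · calc c * fixVec n (fun t => p (Fin.cons true t)) (Fin.tail x)
                ≤ 1 * fixVec n (fun t => p (Fin.cons true t)) (Fin.tail x) :=
                  mul_le_mul_of_nonneg_right hc1 h1.1
              _ = _ := one_mul _
              _ ≤ p x := this ▸ h1.2
        | false =>
          rw [if_neg (by simp)]
          exact ⟨le_refl 0, hx⟩
      · rw [heval x]
        cases hx0 : x 0 with
        | true =>
          rw [if_pos rfl]
          have := hpx x; rw [hx0] at this
          rw [IHb2 (Fin.tail x) (this ▸ hx), mul_zero]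
        | false =>
          rw [if_neg (by simp)]
      · rw [sum_split (fixVec (n+1) p)]
        have e1 : ∑ t : Fin n → Bool, fixVec (n+1) p (Fin.cons true t)
            = c * ∑ t : Fin n → Bool, fixVec n (fun t => p (Fin.cons true t)) t := by
          rw [Finset.mul_sum]; apply Finset.sum_congr rfl; intro t _
          rw [heval]; simp [Fin.tail_cons]
        have e2 : ∑ t : Fin n → Bool, fixVec (n+1) p (Fin.cons false t) = 0 := by
          apply Finset.sum_eq_zero; intro t _
          rw [heval]; simp
        rw [e1, e2, IHb3, zero_add, hc, div_mul_cancel₀ _ (ne_of_gt hB)]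
    · -- both nonpositive: contradiction
      push_neg at hA hB
      exfalso; linarith

end
end

section
/- Let p ∈ ℝ^({0,1}^n) be a probability distribution (nonnegative, summing to 1), and let p' ∈ ℝ^({0,1}^n) satisfy ‖p' − p‖₁ ≤ δ for some δ < 1. Then S := Σ_x p'_x ≥ 1 − δ > 0, and the probability distribution (1/S)·Fix(p') satisfies ‖(1/S)·Fix(p') − p‖₁ ≤ 4δ/(1−δ), where ‖v‖₁ = Σ_x |v_x|. -/
/-!
On each half-cube, `Fix` either recurses, or recurses and rescales (when the other half has
nonpositive mass), or returns zero (when this half has nonpositive mass). A half `b` with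
`Σ b ≤ 0` is "dead": against a nonnegative `p` both the mass of `p` lost there and the rescaling
error `|Σ b|` it causes on the other half are at most `‖b - p‖₁` on that half. Induction then
gives `‖Fix q - p‖₁ ≤ 3 ‖q - p‖₁` for `p ≥ 0`. Since `Fix` preserves the total mass `S`,
normalising by `S` costs another `|S - 1| ≤ δ`, so the error is at most `4δ ≤ 4δ / (1 - δ)`.
-/

open Finset

noncomputable section

section SumBounds

variable {ι : Type*} (s : Finset ι) (f g : ι → ℝ)

theorem abs_sum_sub_sum_le : |∑ x ∈ s, f x - ∑ x ∈ s, g x| ≤ ∑ x ∈ s, |f x - g x| := by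
  rw [← Finset.sum_sub_distrib]
  exact Finset.abs_sum_le_sum_abs _ _

theorem sum_le_sum_abs_sub_of_sum_nonpos (hg : ∀ x ∈ s, 0 ≤ g x) (hf : ∑ x ∈ s, f x ≤ 0) :
    ∑ x ∈ s, g x ≤ ∑ x ∈ s, |f x - g x| ∧ |∑ x ∈ s, f x| ≤ ∑ x ∈ s, |f x - g x| := by
  have hdiff := (abs_le.mp (abs_sum_sub_sum_le s f g)).1
  have hg' : 0 ≤ ∑ x ∈ s, g x := Finset.sum_nonneg hg
  rw [abs_of_nonpos hf]
  constructor <;> linarith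

theorem sum_abs_mul_sub_le (c : ℝ) :
    ∑ x ∈ s, |c * f x - g x| ≤ ∑ x ∈ s, |f x - g x| + |c - 1| * ∑ x ∈ s, |f x| := by
  rw [Finset.mul_sum, ← Finset.sum_add_distrib]
  refine Finset.sum_le_sum fun x _ => ?_
  calc |c * f x - g x| = |(f x - g x) + (c - 1) * f x| := by ring_nf
    _ ≤ |f x - g x| + |c - 1| * |f x| := by rw [← abs_mul]; exact abs_add_le _ _

end SumBounds

section HeadSlice

variable {n : ℕ}

def headSlice (q : (Fin (n + 1) → Bool) → ℝ) (i : Bool) : (Fin n → Bool) → ℝ :=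
  fun x => q (Fin.cons i x)

theorem sum_eq_sum_cons (q : (Fin (n + 1) → Bool) → ℝ) :
    ∑ x, q x = ∑ i : Bool, ∑ x, q (Fin.cons i x) := by
  rw [← (Fin.consEquiv fun _ => Bool).sum_comp q, Fintype.sum_prod_type]
  rfl

theorem sum_eq_sum_headSlice_add (q : (Fin (n + 1) → Bool) → ℝ) (i : Bool) :
    ∑ x, q x = ∑ x, headSlice q i x + ∑ x, headSlice q (!i) x := by
  rw [sum_eq_sum_cons, Fintype.sum_bool]
  cases i
  · exact add_comm _ _
  · rfl

/-- The factor by which `fixVec` multiplies `fixVec n (headSlice q i)`, i.e. `1` or the paper's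
`Σ p / Σ a`. -/
def fixCoeff (q : (Fin (n + 1) → Bool) → ℝ) (i : Bool) : ℝ :=
  if 0 < ∑ x, headSlice q (!i) x then 1 else (∑ x, q x) / ∑ x, headSlice q i x

theorem fixCoeff_nonneg {q : (Fin (n + 1) → Bool) → ℝ} (hq : 0 < ∑ x, q x) {i : Bool}
    (hi : 0 < ∑ x, headSlice q i x) : 0 ≤ fixCoeff q i := by
  unfold fixCoeff
  split_ifs
  exacts [zero_le_one, by positivity]

theorem fixCoeff_mul_sum (q : (Fin (n + 1) → Bool) → ℝ) {i : Bool}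
    (hi : 0 < ∑ x, headSlice q i x) :
    fixCoeff q i * ∑ x, headSlice q i x =
      if 0 < ∑ x, headSlice q (!i) x then ∑ x, headSlice q i x else ∑ x, q x := by
  unfold fixCoeff
  split_ifs
  exacts [one_mul _, div_mul_cancel₀ _ hi.ne']

theorem abs_fixCoeff_sub_one_mul_sum (q : (Fin (n + 1) → Bool) → ℝ) {i : Bool}
    (hi : 0 < ∑ x, headSlice q i x) :
    |fixCoeff q i - 1| * ∑ x, headSlice q i x =
      if 0 < ∑ x, headSlice q (!i) x then 0 else |∑ x, headSlice q (!i) x| := by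
  rw [← abs_of_pos hi, ← abs_mul, sub_one_mul, fixCoeff_mul_sum q hi]
  split_ifs
  · simp
  · rw [sum_eq_sum_headSlice_add q i, add_sub_cancel_left]

theorem fixVec_succ_cons (q : (Fin (n + 1) → Bool) → ℝ) (hq : 0 < ∑ x, q x) (i : Bool)
    (x : Fin n → Bool) :
    fixVec (n + 1) q (Fin.cons i x) =
      if 0 < ∑ y, headSlice q i y then fixCoeff q i * fixVec n (headSlice q i) x else 0 := by
  have hsplit := sum_eq_sum_headSlice_add q false
  unfold fixCoeff headSlice at *
  rw [Bool.not_false] at hsplit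
  cases i <;>
    simp only [fixVec, Fin.cons_zero, Fin.tail_cons, Bool.not_false, Bool.not_true,
      Bool.false_eq_true, reduceIte] <;>
    split_ifs <;> first | rfl | tauto | linarith

theorem fixVec_nonneg : ∀ {n : ℕ} {q : (Fin n → Bool) → ℝ}, 0 < ∑ x, q x →
    ∀ x, 0 ≤ fixVec n q x
  | 0, q, hq, x => by
    rw [Fintype.sum_unique] at hq
    rw [Unique.eq_default x]
    exact hq.le
  | n + 1, q, hq, x => by
    rw [← Fin.cons_self_tail x, fixVec_succ_cons q hq]
    split_ifs with hi
    exacts [mul_nonneg (fixCoeff_nonneg hq hi) (fixVec_nonneg hi _), le_rfl]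

theorem sum_fixVec : ∀ {n : ℕ} {q : (Fin n → Bool) → ℝ}, 0 < ∑ x, q x →
    ∑ x, fixVec n q x = ∑ x, q x
  | 0, _, _ => rfl
  | n + 1, q, hq => by
    have half : ∀ i, ∑ x, fixVec (n + 1) q (Fin.cons i x) =
        if 0 < ∑ x, headSlice q i x then
          (if 0 < ∑ x, headSlice q (!i) x then ∑ x, headSlice q i x else ∑ x, q x)
        else 0 := by
      intro i
      simp only [fixVec_succ_cons q hq]
      split_ifs with hi
      · rw [← Finset.mul_sum, sum_fixVec hi, fixCoeff_mul_sum q hi, if_pos ‹_›]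
      · rw [← Finset.mul_sum, sum_fixVec hi, fixCoeff_mul_sum q hi, if_neg ‹_›]
      · simp
    rw [sum_eq_sum_cons, Fintype.sum_bool, half, half]
    have hsplit := sum_eq_sum_headSlice_add q false
    simp only [Bool.not_true, Bool.not_false] at hsplit ⊢
    split_ifs <;> linarith

theorem sum_abs_fixVec_succ_cons_sub_le (p q : (Fin (n + 1) → Bool) → ℝ) (hq : 0 < ∑ x, q x)
    {i : Bool} (hi : 0 < ∑ x, headSlice q i x) :
    ∑ x, |fixVec (n + 1) q (Fin.cons i x) - p (Fin.cons i x)| ≤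
      ∑ x, |fixVec n (headSlice q i) x - headSlice p i x| +
        if 0 < ∑ x, headSlice q (!i) x then 0 else |∑ x, headSlice q (!i) x| := by
  simp only [fixVec_succ_cons q hq, if_pos hi]
  have habs : ∑ x, |fixVec n (headSlice q i) x| = ∑ x, headSlice q i x := by
    simp only [abs_of_nonneg (fixVec_nonneg hi _), sum_fixVec hi]
  calc _ ≤ _ := sum_abs_mul_sub_le _ _ (headSlice p i) (fixCoeff q i)
    _ = _ := by rw [habs, abs_fixCoeff_sub_one_mul_sum q hi]

theorem sum_abs_fixVec_succ_cons_sub_eq_of_not_pos {p : (Fin (n + 1) → Bool) → ℝ}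
    (hp : ∀ x, 0 ≤ p x) (q : (Fin (n + 1) → Bool) → ℝ) (hq : 0 < ∑ x, q x) {i : Bool}
    (hi : ¬0 < ∑ x, headSlice q i x) :
    ∑ x, |fixVec (n + 1) q (Fin.cons i x) - p (Fin.cons i x)| = ∑ x, headSlice p i x := by
  simp only [fixVec_succ_cons q hq, if_neg hi, zero_sub, abs_neg]
  exact Finset.sum_congr rfl fun x _ => abs_of_nonneg (hp _)

theorem sum_abs_fixVec_sub_le : ∀ {n : ℕ} {p q : (Fin n → Bool) → ℝ}, (∀ x, 0 ≤ p x) →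
    0 < ∑ x, q x → ∑ x, |fixVec n q x - p x| ≤ 3 * ∑ x, |q x - p x|
  | 0, _, _, _, _ =>
    le_mul_of_one_le_left (Finset.sum_nonneg fun _ _ => abs_nonneg _) (by norm_num)
  | n + 1, p, q, hp, hq => by
    set E : Bool → ℝ := fun i => ∑ x, |headSlice q i x - headSlice p i x|
    have hpi : ∀ i x, 0 ≤ headSlice p i x := fun _ _ => hp _
    have hE0 : ∀ i, 0 ≤ E i := fun i => Finset.sum_nonneg fun _ _ => abs_nonneg _
    have hdead : ∀ i, ¬0 < ∑ x, headSlice q i x →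
        ∑ x, headSlice p i x ≤ E i ∧ |∑ x, headSlice q i x| ≤ E i := fun i hi =>
      sum_le_sum_abs_sub_of_sum_nonpos _ _ _ (fun x _ => hpi i x) (not_lt.mp hi)
    have half : ∀ i, ∑ x, |fixVec (n + 1) q (Fin.cons i x) - p (Fin.cons i x)| ≤
        if 0 < ∑ x, headSlice q i x then
          3 * E i + (if 0 < ∑ x, headSlice q (!i) x then 0 else E (!i))
        else E i := by
      intro i
      split_ifs with hi hi'
      · have := sum_abs_fixVec_succ_cons_sub_le p q hq hi
        rw [if_pos hi'] at this
        linarith [sum_abs_fixVec_sub_le (hpi i) hi]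
      · have := sum_abs_fixVec_succ_cons_sub_le p q hq hi
        rw [if_neg hi'] at this
        linarith [sum_abs_fixVec_sub_le (hpi i) hi, (hdead _ hi').2]
      · rw [sum_abs_fixVec_succ_cons_sub_eq_of_not_pos hp q hq hi]
        exact (hdead i hi).1
    rw [sum_eq_sum_cons, sum_eq_sum_cons fun x => |q x - p x|, Fintype.sum_bool,
      Fintype.sum_bool]
    change _ ≤ 3 * (E true + E false)
    have hsplit := sum_eq_sum_headSlice_add q false
    have h₁ := half true
    have h₂ := half false
    simp only [Bool.not_true, Bool.not_false] at hsplit h₁ h₂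
    have h₃ := hE0 true
    have h₄ := hE0 false
    split_ifs at h₁ h₂ <;> linarith

end HeadSlice

/-- if `p` is a probability distribution and `‖p' − p‖₁ ≤ δ < 1`, then
`S = Σ_x p'_x ≥ 1 − δ > 0` and `‖(1/S)·Fix(p') − p‖₁ ≤ 4δ/(1−δ)`. -/
theorem fixVec_sampling_error (n : ℕ) (p p' : (Fin n → Bool) → ℝ)
    (hpos : ∀ x, 0 ≤ p x) (hsum : ∑ x : Fin n → Bool, p x = 1)
    (δ : ℝ) (hδ : δ < 1) (hdist : ∑ x : Fin n → Bool, |p' x - p x| ≤ δ) :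
    (1 - δ ≤ ∑ x : Fin n → Bool, p' x) ∧ (0 < 1 - δ) ∧
    ∑ x : Fin n → Bool,
        |(1 / (∑ y : Fin n → Bool, p' y)) * fixVec n p' x - p x|
      ≤ 4 * δ / (1 - δ) := by
  set S := ∑ y, p' y
  have hS : |S - 1| ≤ δ := hsum ▸ (abs_sum_sub_sum_le _ p' p).trans hdist
  have hδ₀ : 0 ≤ δ := (abs_nonneg _).trans hS
  have hSδ : 1 - δ ≤ S := by linarith [(abs_le.mp hS).1]
  have hS₀ : 0 < S := by linarith
  have hfix : ∑ x, |fixVec n p' x| = S :=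
    (Finset.sum_congr rfl fun x _ => abs_of_nonneg (fixVec_nonneg hS₀ x)).trans (sum_fixVec hS₀)
  have hscale : |1 / S - 1| * S = |S - 1| :=
    calc |1 / S - 1| * S = |(1 / S - 1) * S| := by rw [abs_mul, abs_of_pos hS₀]
      _ = |S - 1| := by rw [abs_sub_comm S]; congr 1; field_simp
  refine ⟨hSδ, by linarith, ?_⟩
  calc _ ≤ ∑ x, |fixVec n p' x - p x| + |1 / S - 1| * ∑ x, |fixVec n p' x| :=
        sum_abs_mul_sub_le _ _ _ _
    _ ≤ 3 * δ + δ := by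
        rw [hfix, hscale]
        linarith [sum_abs_fixVec_sub_le hpos hS₀]
    _ ≤ 4 * δ / (1 - δ) := by
        rw [le_div_iff₀ (by linarith)]
        nlinarith

end
end

section
/- For every r ∈ ℕ and every real ε with 0 ≤ ε ≤ 1, one has Σ_{i : 2i > r, i ≤ r} C(r,i)·(ε/2)^i·(1−ε/2)^(r−i) ≤ (ε·(2−ε))^(r/2), where C(r,i) is the binomial coefficient and the right-hand side is the real power with exponent r/2. -/
open Finset

lemma term_bound (r i : ℕ) (hi : i ≤ r) (h2 : r < 2 * i) (p q : ℝ)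
    (hp : 0 ≤ p) (hq0 : 0 < q) (hpq : p ≤ q) :
    p ^ i * q ^ (r - i) ≤ (p * q) ^ ((r : ℝ) / 2) := by
  rcases hp.eq_or_lt with h0 | h0
  · have hi1 : 1 ≤ i := by omega
    rw [← h0, zero_pow (by omega), zero_mul]
    positivity
  · have hir : (r : ℝ) / 2 ≤ (i : ℝ) := by
      have : (r : ℝ) < 2 * i := by exact_mod_cast h2
      linarith
    have e1 : p ^ i = p ^ ((r : ℝ) / 2) * p ^ ((i : ℝ) - (r : ℝ) / 2) := by
      rw [← Real.rpow_add h0, add_sub_cancel, Real.rpow_natCast]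
    have e2 : q ^ ((i : ℝ) - (r : ℝ) / 2) * q ^ (r - i) = q ^ ((r : ℝ) / 2) := by
      rw [← Real.rpow_natCast q (r - i), ← Real.rpow_add hq0]
      congr 1
      have : ((r - i : ℕ) : ℝ) = (r : ℝ) - i := by
        rw [Nat.cast_sub hi]
      rw [this]; ring
    calc p ^ i * q ^ (r - i)
        = p ^ ((r : ℝ) / 2) * (p ^ ((i : ℝ) - (r : ℝ) / 2) * q ^ (r - i)) := by
          rw [e1]; ring
      _ ≤ p ^ ((r : ℝ) / 2) * (q ^ ((i : ℝ) - (r : ℝ) / 2) * q ^ (r - i)) := by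
          apply mul_le_mul_of_nonneg_left
          · apply mul_le_mul_of_nonneg_right
            · exact Real.rpow_le_rpow h0.le hpq (by linarith)
            · positivity
          · positivity
      _ = p ^ ((r : ℝ) / 2) * q ^ ((r : ℝ) / 2) := by rw [e2]
      _ = (p * q) ^ ((r : ℝ) / 2) := (Real.mul_rpow h0.le hq0.le).symm

/-- for every `r ∈ ℕ` and `0 ≤ ε ≤ 1`,
`Σ_{i : r/2 < i ≤ r} C(r,i)·(ε/2)^i·(1−ε/2)^(r−i) ≤ (ε·(2−ε))^(r/2)`
(the right-hand side being a real power). -/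
theorem majority_vote_error_bound (r : ℕ) (ε : ℝ) (hε0 : 0 ≤ ε) (hε1 : ε ≤ 1) :
    ∑ i ∈ (Finset.range (r + 1)).filter (fun i => r < 2 * i),
        (r.choose i : ℝ) * (ε / 2) ^ i * (1 - ε / 2) ^ (r - i)
      ≤ (ε * (2 - ε)) ^ ((r : ℝ) / 2) := by
  set p : ℝ := ε / 2 with hp
  set q : ℝ := 1 - ε / 2 with hq
  have hp0 : 0 ≤ p := by positivity
  have hq0 : 0 < q := by rw [hq]; linarith
  have hpq : p ≤ q := by rw [hp, hq]; linarith
  have key : ∀ i ∈ (Finset.range (r + 1)).filter (fun i => r < 2 * i),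
      (r.choose i : ℝ) * p ^ i * q ^ (r - i)
        ≤ (r.choose i : ℝ) * (p * q) ^ ((r : ℝ) / 2) := by
    intro i hi
    simp only [mem_filter, mem_range] at hi
    rw [mul_assoc]
    exact mul_le_mul_of_nonneg_left
      (term_bound r i (by omega) hi.2 p q hp0 hq0 hpq) (by positivity)
  calc ∑ i ∈ (Finset.range (r + 1)).filter (fun i => r < 2 * i),
        (r.choose i : ℝ) * p ^ i * q ^ (r - i)
      ≤ ∑ i ∈ (Finset.range (r + 1)).filter (fun i => r < 2 * i),
        (r.choose i : ℝ) * (p * q) ^ ((r : ℝ) / 2) := Finset.sum_le_sum key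
    _ = (∑ i ∈ (Finset.range (r + 1)).filter (fun i => r < 2 * i),
        (r.choose i : ℝ)) * (p * q) ^ ((r : ℝ) / 2) := by rw [← Finset.sum_mul]
    _ ≤ (2 : ℝ) ^ r * (p * q) ^ ((r : ℝ) / 2) := by
        apply mul_le_mul_of_nonneg_right _ (Real.rpow_nonneg (mul_nonneg hp0 hq0.le) _)
        calc ∑ i ∈ (Finset.range (r + 1)).filter (fun i => r < 2 * i),
              (r.choose i : ℝ)
            ≤ ∑ i ∈ Finset.range (r + 1), (r.choose i : ℝ) :=
              Finset.sum_le_sum_of_subset_of_nonneg (filter_subset _ _)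
                (fun i _ _ => by positivity)
          _ = (2 : ℝ) ^ r := by
              rw [← Nat.cast_sum, Nat.sum_range_choose]; push_cast; ring
    _ = (4 * (p * q)) ^ ((r : ℝ) / 2) := by
        have h4 : (4 : ℝ) ^ ((r : ℝ) / 2) = (2 : ℝ) ^ r := by
          have h2 : (4 : ℝ) = (2 : ℝ) ^ (2 : ℝ) := by
            have := Real.rpow_natCast (2 : ℝ) 2
            norm_num at this; linarith
          rw [h2, ← Real.rpow_natCast (2 : ℝ) r,
            ← Real.rpow_mul (by norm_num : (0:ℝ) ≤ 2),
            show (2:ℝ) * ((r:ℝ)/2) = (r:ℝ) by ring, Real.rpow_natCast]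
        rw [Real.mul_rpow (by norm_num) (mul_nonneg hp0 hq0.le), h4]
    _ = (ε * (2 - ε)) ^ ((r : ℝ) / 2) := by
        congr 1; rw [hp, hq]; ring
end
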